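/- arXiv:2009.02475 — 5 statements merged into one kernel-verified Lean document; each statement's English description precedes it below -/
import Mathlib

section
/- Let g ∈ Aut(ℚ, ≤) be such that for every x ∈ ℚ there exists y > x with g y > y and there exists z < x with g z < z. Then there exists h ∈ Aut(ℚ, ≤) such that the automorphism f = g ∘ h⁻¹ ∘ g ∘ h has a +-orbital unbounded above and a −-orbital unbounded below; that is, there exist a, b ∈ ℚ with f a > a and {f^k a : k ∈ ℤ} unbounded above, and with f b < b and {f^k b : k ∈ ℤ} unbounded below. -/
set_option linter.unreachableTactic false
set_option linter.unnecessarySeqFocus false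
set_option linter.unusedTactic false

namespace Stmt7Aux

noncomputable def upSeq (G : Equiv.Perm ℚ) (P : ℚ → ℚ) : ℕ → ℚ
  | 0 => P 0
  | n + 1 => P (max (G (upSeq G P n)) n)

noncomputable def downSeq (G : Equiv.Perm ℚ) (S : ℚ → ℚ) : ℕ → ℚ
  | 0 => S 0
  | n + 1 => S (min (G (downSeq G S n)) (-(n : ℚ)))


noncomputable def interleave (a b e f : ℕ → ℚ) : ℤ → ℚ
  | .ofNat m => if m % 2 = 0 then a (m / 2) else b (m / 2)
  | .negSucc m => if m % 2 = 0 then e (m / 2) else f (m / 2)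

lemma il_even (a b e f : ℕ → ℚ) (m : ℕ) :
    interleave a b e f (Int.ofNat (2 * m)) = a m := by
  show (if (2 * m) % 2 = 0 then a ((2 * m) / 2) else b ((2 * m) / 2)) = a m
  rw [if_pos (by omega)]
  congr 1
  omega

lemma il_odd (a b e f : ℕ → ℚ) (m : ℕ) :
    interleave a b e f (Int.ofNat (2 * m + 1)) = b m := by
  show (if (2 * m + 1) % 2 = 0 then a ((2 * m + 1) / 2) else b ((2 * m + 1) / 2)) = b m
  rw [if_neg (by omega)]
  congr 1
  omega

lemma il_neg_even (a b e f : ℕ → ℚ) (m : ℕ) :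
    interleave a b e f (Int.negSucc (2 * m)) = e m := by
  show (if (2 * m) % 2 = 0 then e ((2 * m) / 2) else f ((2 * m) / 2)) = e m
  rw [if_pos (by omega)]
  congr 1
  omega

lemma il_neg_odd (a b e f : ℕ → ℚ) (m : ℕ) :
    interleave a b e f (Int.negSucc (2 * m + 1)) = f m := by
  show (if (2 * m + 1) % 2 = 0 then e ((2 * m + 1) / 2) else f ((2 * m + 1) / 2)) = f m
  rw [if_neg (by omega)]
  congr 1
  omega

lemma il_strictMono {a b e f : ℕ → ℚ}
    (h1 : ∀ m, a m < b m) (h2 : ∀ m, b m < a (m + 1))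
    (h3 : ∀ m, f m < e m) (h4 : ∀ m, e (m + 1) < f m)
    (h5 : e 0 < a 0) : StrictMono (interleave a b e f) := by
  apply strictMono_int_of_lt_succ
  intro k
  rcases k with m | m
  · have base : Int.ofNat m + 1 = Int.ofNat (m + 1) := rfl
    rcases Nat.even_or_odd m with ⟨j, hj⟩ | ⟨j, hj⟩
    · have e1 : Int.ofNat m = Int.ofNat (2 * j) := by congr 1 <;> omega
      have e2 : Int.ofNat m + 1 = Int.ofNat (2 * j + 1) := by rw [base]; congr 1 <;> omega
      rw [e2, e1, il_even, il_odd]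
      exact h1 j
    · have e1 : Int.ofNat m = Int.ofNat (2 * j + 1) := by congr 1 <;> omega
      have e2 : Int.ofNat m + 1 = Int.ofNat (2 * (j + 1)) := by rw [base]; congr 1 <;> omega
      rw [e2, e1, il_odd, il_even]
      exact h2 j
  · rcases m with _ | m
    · have e2 : Int.negSucc 0 + 1 = Int.ofNat (2 * 0) := by decide
      have e1 : Int.negSucc 0 = Int.negSucc (2 * 0) := by decide
      rw [e1, e2, il_neg_even, il_even]
      exact h5
    · have estep : Int.negSucc (m + 1) + 1 = Int.negSucc m := by
        rw [Int.negSucc_eq, Int.negSucc_eq]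
        push_cast
        ring
      rw [estep]
      rcases Nat.even_or_odd m with ⟨j, hj⟩ | ⟨j, hj⟩
      · have e1 : Int.negSucc (m + 1) = Int.negSucc (2 * j + 1) := by congr 1 <;> omega
        have e2 : Int.negSucc m = Int.negSucc (2 * j) := by congr 1 <;> omega
        rw [e1, e2, il_neg_odd, il_neg_even]
        exact h3 j
      · have e1 : Int.negSucc (m + 1) = Int.negSucc (2 * (j + 1)) := by congr 1 <;> omega
        have e2 : Int.negSucc m = Int.negSucc (2 * j + 1) := by congr 1 <;> omega
        rw [e1, e2, il_neg_even, il_neg_odd]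
        exact h4 j



open Classical in
noncomputable def glue (c d : ℤ → ℚ) (x : ℚ) : ℚ :=
  if H : ∃ n : ℤ, c n ≤ x ∧ x < c (n + 1) then
    d (Classical.choose H) +
      (x - c (Classical.choose H)) *
        (d (Classical.choose H + 1) - d (Classical.choose H)) /
        (c (Classical.choose H + 1) - c (Classical.choose H))
  else x

lemma block_uniq {c : ℤ → ℚ} (hc : StrictMono c) {x : ℚ} {m n : ℤ}
    (hm1 : c m ≤ x) (hm2 : x < c (m + 1)) (hn1 : c n ≤ x) (hn2 : x < c (n + 1)) :
    m = n := by
  by_contra hne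
  rcases lt_or_gt_of_ne hne with h | h
  · exact absurd (le_trans (hc.monotone (by omega : m + 1 ≤ n)) hn1) (not_le.mpr hm2)
  · exact absurd (le_trans (hc.monotone (by omega : n + 1 ≤ m)) hm1) (not_le.mpr hn2)

lemma glue_eq {c : ℤ → ℚ} (hc : StrictMono c) (d : ℤ → ℚ) {x : ℚ} {n : ℤ}
    (h1 : c n ≤ x) (h2 : x < c (n + 1)) :
    glue c d x = d n + (x - c n) * (d (n + 1) - d n) / (c (n + 1) - c n) := by
  have H : ∃ n : ℤ, c n ≤ x ∧ x < c (n + 1) := ⟨n, h1, h2⟩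
  have hspec := Classical.choose_spec H
  have heq := block_uniq hc hspec.1 hspec.2 h1 h2
  rw [glue, dif_pos H, heq]

lemma glue_apply_c {c : ℤ → ℚ} (hc : StrictMono c) (d : ℤ → ℚ) (n : ℤ) :
    glue c d (c n) = d n := by
  rw [glue_eq hc d le_rfl (hc (lt_add_one n))]
  simp

lemma glue_mem {c d : ℤ → ℚ} (hc : StrictMono c) (hd : StrictMono d) {x : ℚ} {n : ℤ}
    (h1 : c n ≤ x) (h2 : x < c (n + 1)) :
    d n ≤ glue c d x ∧ glue c d x < d (n + 1) := by
  rw [glue_eq hc d h1 h2]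
  have hcp : (0 : ℚ) < c (n + 1) - c n := by have := hc (lt_add_one n); linarith
  have hdp : (0 : ℚ) < d (n + 1) - d n := by have := hd (lt_add_one n); linarith
  constructor
  · have : (0 : ℚ) ≤ (x - c n) * (d (n + 1) - d n) / (c (n + 1) - c n) :=
      div_nonneg (mul_nonneg (by linarith) hdp.le) hcp.le
    linarith
  · have h3 : (x - c n) * (d (n + 1) - d n) / (c (n + 1) - c n) < d (n + 1) - d n := by
      rw [div_lt_iff₀ hcp]
      nlinarith
    linarith

lemma exists_block {c : ℤ → ℚ} (hc : StrictMono c)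
    (hA : ∀ x : ℚ, ∃ n : ℤ, x < c n) (hB : ∀ x : ℚ, ∃ n : ℤ, c n < x) (x : ℚ) :
    ∃ n : ℤ, c n ≤ x ∧ x < c (n + 1) := by
  obtain ⟨M, hM⟩ := hA x
  have hbdd : ∀ n : ℤ, c n ≤ x → n ≤ M := by
    intro n hn
    by_contra h
    push_neg at h
    have := hc h
    linarith
  obtain ⟨n₀, hn₀⟩ := hB x
  obtain ⟨n, hn, hmax⟩ := Int.exists_greatest_of_bdd ⟨M, hbdd⟩ ⟨n₀, hn₀.le⟩
  refine ⟨n, hn, ?_⟩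
  by_contra h
  push_neg at h
  have := hmax (n + 1) h
  omega

lemma glue_strictMono {c d : ℤ → ℚ} (hc : StrictMono c) (hd : StrictMono d)
    (hA : ∀ x : ℚ, ∃ n : ℤ, x < c n) (hB : ∀ x : ℚ, ∃ n : ℤ, c n < x) :
    StrictMono (glue c d) := by
  intro x y hxy
  obtain ⟨m, hm1, hm2⟩ := exists_block hc hA hB x
  obtain ⟨n, hn1, hn2⟩ := exists_block hc hA hB y
  have hmn : m ≤ n := by
    by_contra h
    push_neg at h
    have h5 := hc.monotone (show n + 1 ≤ m by omega)
    linarith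
  rcases eq_or_lt_of_le hmn with rfl | hlt
  · rw [glue_eq hc d hm1 hm2, glue_eq hc d hn1 hn2]
    have hcp : (0 : ℚ) < c (m + 1) - c m := by have := hc (lt_add_one m); linarith
    have hdp : (0 : ℚ) < d (m + 1) - d m := by have := hd (lt_add_one m); linarith
    have h6 : (x - c m) * (d (m + 1) - d m) < (y - c m) * (d (m + 1) - d m) :=
      mul_lt_mul_of_pos_right (by linarith) hdp
    have h7 := (div_lt_div_iff_of_pos_right hcp).mpr h6
    linarith
  · have h1 := (glue_mem hc hd hm1 hm2).2
    have h2 := (glue_mem hc hd hn1 hn2).1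
    have h3 : d (m + 1) ≤ d n := hd.monotone (by omega)
    linarith

lemma glue_glue {c d : ℤ → ℚ} (hc : StrictMono c) (hd : StrictMono d)
    {y : ℚ} {n : ℤ} (h1 : d n ≤ y) (h2 : y < d (n + 1)) :
    glue c d (glue d c y) = y := by
  obtain ⟨hx1, hx2⟩ := glue_mem hd hc h1 h2
  rw [glue_eq hc d hx1 hx2, glue_eq hd c h1 h2]
  have hcp : (0 : ℚ) < c (n + 1) - c n := by have := hc (lt_add_one n); linarith
  have hdp : (0 : ℚ) < d (n + 1) - d n := by have := hd (lt_add_one n); linarith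
  field_simp
  ring

lemma exists_perm (c d : ℤ → ℚ) (hc : StrictMono c) (hd : StrictMono d)
    (hA : ∀ x : ℚ, ∃ n : ℤ, x < c n) (hB : ∀ x : ℚ, ∃ n : ℤ, c n < x)
    (hA' : ∀ x : ℚ, ∃ n : ℤ, x < d n) (hB' : ∀ x : ℚ, ∃ n : ℤ, d n < x) :
    ∃ H : Equiv.Perm ℚ, (∀ a b : ℚ, a ≤ b ↔ H a ≤ H b) ∧ ∀ n : ℤ, H (c n) = d n := by
  have mono := glue_strictMono hc hd hA hB
  have surj : Function.Surjective (glue c d) := by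
    intro y
    obtain ⟨n, h1, h2⟩ := exists_block hd hA' hB' y
    exact ⟨glue d c y, glue_glue hc hd h1 h2⟩
  refine ⟨Equiv.ofBijective _ ⟨mono.injective, surj⟩, ?_, ?_⟩
  · intro a b
    exact (mono.le_iff_le).symm
  · intro n
    exact glue_apply_c hc d n


end Stmt7Aux

open Stmt7Aux


/-- The automorphism group of `(ℚ, ≤)`, as a subgroup of `Equiv.Perm ℚ`. -/
def QAut : Subgroup (Equiv.Perm ℚ) where
  carrier := {g | ∀ a b : ℚ, a ≤ b ↔ g a ≤ g b}
  one_mem' := fun _ _ => Iff.rfl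
  mul_mem' := by
    intro g h hg hh a b
    exact (hh a b).trans (hg (h a) (h b))
  inv_mem' := by
    intro g hg a b
    simpa using (hg (g⁻¹ a) (g⁻¹ b)).symm

/-- `f` has a single `+`-orbital: there is `a` with `a < f a` whose orbit
`{f^k a : k ∈ ℤ}` is unbounded above and below in `ℚ`. -/
def SinglePlusQ (f : Equiv.Perm ℚ) : Prop :=
  ∃ a : ℚ, a < f a ∧ (∀ x : ℚ, ∃ k : ℤ, x < (f ^ k) a) ∧ (∀ x : ℚ, ∃ k : ℤ, (f ^ k) a < x)

/-- `f` has a single `−`-orbital: there is `a` with `f a < a` whose orbit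
`{f^k a : k ∈ ℤ}` is unbounded above and below in `ℚ`. -/
def SingleMinusQ (f : Equiv.Perm ℚ) : Prop :=
  ∃ a : ℚ, f a < a ∧ (∀ x : ℚ, ∃ k : ℤ, x < (f ^ k) a) ∧ (∀ x : ℚ, ∃ k : ℤ, (f ^ k) a < x)

/-- `f` has a `+`-orbital unbounded above. -/
def PlusUnbAboveQ (f : Equiv.Perm ℚ) : Prop :=
  ∃ a : ℚ, a < f a ∧ ∀ x : ℚ, ∃ k : ℤ, x < (f ^ k) a

/-- `f` has a `−`-orbital unbounded below. -/
def MinusUnbBelowQ (f : Equiv.Perm ℚ) : Prop :=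
  ∃ b : ℚ, f b < b ∧ ∀ x : ℚ, ∃ k : ℤ, (f ^ k) b < x

/-- If `g ∈ Aut(ℚ, ≤)` is such that every `x` has some `y > x` with
`g y > y` and some `z < x` with `g z < z`, then there is `h ∈ Aut(ℚ, ≤)` such that
`g ∘ h⁻¹ ∘ g ∘ h` has a `+`-orbital unbounded above and a `−`-orbital unbounded below. -/
theorem stmt7 (g : QAut)
    (hg : ∀ x : ℚ, (∃ y, x < y ∧ y < (g : Equiv.Perm ℚ) y) ∧
      (∃ z, z < x ∧ (g : Equiv.Perm ℚ) z < z)) :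
    ∃ h : QAut, PlusUnbAboveQ ((g * h⁻¹ * g * h : QAut) : Equiv.Perm ℚ) ∧
      MinusUnbBelowQ ((g * h⁻¹ * g * h : QAut) : Equiv.Perm ℚ) := by
  set G : Equiv.Perm ℚ := (g : Equiv.Perm ℚ) with hGdef
  have hgle : ∀ a b : ℚ, a ≤ b ↔ G a ≤ G b := g.2
  have hGmono : StrictMono (G : ℚ → ℚ) := fun a b hab =>
    lt_of_le_of_ne ((hgle a b).1 hab.le) (fun e => hab.ne (G.injective e))
  choose P hP1 hP2 using fun x => (hg x).1
  choose S hS1 hS2 using fun x => (hg x).2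
  set p : ℕ → ℚ := upSeq G P with hpdef
  set s : ℕ → ℚ := downSeq G S with hsdef
  -- basic properties of p
  have hpPos : ∀ n, p n < G (p n) := by
    intro n
    cases n with
    | zero => exact hP2 0
    | succ k => exact hP2 _
  have hq_lt : ∀ n, G (p n) < p (n + 1) := by
    intro n
    have : p (n + 1) = P (max (G (p n)) n) := rfl
    rw [this]
    exact lt_of_le_of_lt (le_max_left _ _) (hP1 _)
  have hp_gt_n : ∀ n : ℕ, (n : ℚ) < p (n + 1) := by
    intro n
    have : p (n + 1) = P (max (G (p n)) n) := rfl
    rw [this]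
    exact lt_of_le_of_lt (le_max_right _ _) (hP1 _)
  have hsNeg : ∀ n, G (s n) < s n := by
    intro n
    cases n with
    | zero => exact hS2 0
    | succ k => exact hS2 _
  have hu_gt : ∀ n, s (n + 1) < G (s n) := by
    intro n
    have : s (n + 1) = S (min (G (s n)) (-(n : ℚ))) := rfl
    rw [this]
    exact lt_of_lt_of_le (hS1 _) (min_le_left _ _)
  have hs_lt_n : ∀ n : ℕ, s (n + 1) < -(n : ℚ) := by
    intro n
    have : s (n + 1) = S (min (G (s n)) (-(n : ℚ))) := rfl
    rw [this]
    exact lt_of_lt_of_le (hS1 _) (min_le_right _ _)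
  have hs0p0 : s 0 < p 0 := by
    have h1 : s 0 = S 0 := rfl
    have h2 : p 0 = P 0 := rfl
    rw [h1, h2]
    exact lt_trans (hS1 0) (hP1 0)
  -- derived sequences
  set q : ℕ → ℚ := fun n => G (p n) with hqdef
  set r : ℕ → ℚ := fun n => G⁻¹ (p (n + 1)) with hrdef
  set u : ℕ → ℚ := fun n => G (s n) with hudef
  set t : ℕ → ℚ := fun n => G⁻¹ (s (n + 1)) with htdef
  have hGr : ∀ n, G (r n) = p (n + 1) := fun n => G.apply_symm_apply _
  have hGt : ∀ n, G (t n) = s (n + 1) := fun n => G.apply_symm_apply _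
  have hpr : ∀ n, p n < r n := by
    intro n
    have : G (p n) < G (r n) := by rw [hGr]; exact hq_lt n
    exact hGmono.lt_iff_lt.mp this
  have hrp : ∀ n, r n < p (n + 1) := by
    intro n
    have : G (r n) < G (p (n + 1)) := by rw [hGr]; exact hpPos (n + 1)
    exact hGmono.lt_iff_lt.mp this
  have hts : ∀ n, t n < s n := by
    intro n
    have : G (t n) < G (s n) := by rw [hGt]; exact hu_gt n
    exact hGmono.lt_iff_lt.mp this
  have hst : ∀ n, s (n + 1) < t n := by
    intro n
    have : G (s (n + 1)) < G (t n) := by rw [hGt]; exact hsNeg (n + 1)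
    exact hGmono.lt_iff_lt.mp this
  have hpq : ∀ n, p n < q n := hpPos
  have hqp : ∀ n, q n < p (n + 1) := hq_lt
  have hus : ∀ n, u n < s n := hsNeg
  have hsu : ∀ n, s (n + 1) < u n := hu_gt
  -- interleaved sequences
  set c : ℤ → ℚ := interleave p r s t with hcdef
  set d : ℤ → ℚ := interleave p q s u with hddef
  have hc : StrictMono c := il_strictMono hpr hrp hts hst hs0p0
  have hd : StrictMono d := il_strictMono hpq hqp hus hsu hs0p0
  have hpUnb : ∀ x : ℚ, ∃ n : ℕ, x < p n := by
    intro x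
    obtain ⟨n, hn⟩ := exists_nat_ge x
    exact ⟨n + 1, lt_of_le_of_lt hn (hp_gt_n n)⟩
  have hsUnb : ∀ x : ℚ, ∃ n : ℕ, s n < x := by
    intro x
    obtain ⟨n, hn⟩ := exists_nat_ge (-x)
    refine ⟨n + 1, lt_of_lt_of_le (hs_lt_n n) ?_⟩
    linarith
  have hcA : ∀ x : ℚ, ∃ k : ℤ, x < c k := by
    intro x
    obtain ⟨n, hn⟩ := hpUnb x
    exact ⟨Int.ofNat (2 * n), by rw [hcdef, il_even]; exact hn⟩
  have hcB : ∀ x : ℚ, ∃ k : ℤ, c k < x := by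
    intro x
    obtain ⟨n, hn⟩ := hsUnb x
    exact ⟨Int.negSucc (2 * n), by rw [hcdef, il_neg_even]; exact hn⟩
  have hdA : ∀ x : ℚ, ∃ k : ℤ, x < d k := by
    intro x
    obtain ⟨n, hn⟩ := hpUnb x
    exact ⟨Int.ofNat (2 * n), by rw [hddef, il_even]; exact hn⟩
  have hdB : ∀ x : ℚ, ∃ k : ℤ, d k < x := by
    intro x
    obtain ⟨n, hn⟩ := hsUnb x
    exact ⟨Int.negSucc (2 * n), by rw [hddef, il_neg_even]; exact hn⟩
  obtain ⟨H, hHord, hHc⟩ := exists_perm c d hc hd hcA hcB hdA hdB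
  refine ⟨⟨H, hHord⟩, ?_⟩
  set f : Equiv.Perm ℚ :=
    ((g * (⟨H, hHord⟩ : QAut)⁻¹ * g * ⟨H, hHord⟩ : QAut) : Equiv.Perm ℚ) with hfdef
  have hfapp : ∀ x : ℚ, f x = G (H⁻¹ (G (H x))) := by
    intro x
    rw [hfdef]
    rfl
  have hHinv : ∀ k : ℤ, H⁻¹ (d k) = c k := by
    intro k
    rw [← hHc k]
    exact H.symm_apply_apply _
  -- key computations
  have hHp : ∀ n : ℕ, H (p n) = p n := by
    intro n
    have h1 := hHc (Int.ofNat (2 * n))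
    rw [hcdef, hddef, il_even, il_even] at h1
    exact h1
  have hHiq : ∀ n : ℕ, H⁻¹ (q n) = r n := by
    intro n
    have h1 := hHinv (Int.ofNat (2 * n + 1))
    rw [hcdef, hddef, il_odd, il_odd] at h1
    exact h1
  have hHs : ∀ n : ℕ, H (s n) = s n := by
    intro n
    have h1 := hHc (Int.negSucc (2 * n))
    rw [hcdef, hddef, il_neg_even, il_neg_even] at h1
    exact h1
  have hHiu : ∀ n : ℕ, H⁻¹ (u n) = t n := by
    intro n
    have h1 := hHinv (Int.negSucc (2 * n + 1))
    rw [hcdef, hddef, il_neg_odd, il_neg_odd] at h1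
    exact h1
  have hfp : ∀ n : ℕ, f (p n) = p (n + 1) := by
    intro n
    rw [hfapp, hHp n]
    have : G (p n) = q n := rfl
    rw [this, hHiq n, hGr n]
  have hfs : ∀ n : ℕ, f (s n) = s (n + 1) := by
    intro n
    rw [hfapp, hHs n]
    have : G (s n) = u n := rfl
    rw [this, hHiu n, hGt n]
  have hfppow : ∀ n : ℕ, (f ^ n) (p 0) = p n := by
    intro n
    induction n with
    | zero => rw [pow_zero]; rfl
    | succ k ih => rw [pow_succ', Equiv.Perm.mul_apply, ih]; exact hfp k
  have hfspow : ∀ n : ℕ, (f ^ n) (s 0) = s n := by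
    intro n
    induction n with
    | zero => rw [pow_zero]; rfl
    | succ k ih => rw [pow_succ', Equiv.Perm.mul_apply, ih]; exact hfs k
  constructor
  · refine ⟨p 0, ?_, ?_⟩
    · rw [hfp 0]
      exact lt_trans (hpPos 0) (hq_lt 0)
    · intro x
      obtain ⟨n, hn⟩ := hpUnb x
      exact ⟨(n : ℤ), by rw [zpow_natCast, hfppow]; exact hn⟩
  · refine ⟨s 0, ?_, ?_⟩
    · rw [hfs 0]
      exact lt_trans (hu_gt 0) (hsNeg 0)
    · intro x
      obtain ⟨n, hn⟩ := hsUnb x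
      exact ⟨(n : ℤ), by rw [zpow_natCast, hfspow]; exact hn⟩
end

section
/- Let g ∈ Aut(ℚ, ≤) have a +-orbital unbounded above and a −-orbital unbounded below; that is, there exists a ∈ ℚ with g a > a and {g^k a : k ∈ ℤ} unbounded above, and there exists b ∈ ℚ with g b < b and {g^k b : k ∈ ℤ} unbounded below. Then there exists h ∈ Aut(ℚ, ≤) such that the commutator g⁻¹ ∘ h⁻¹ ∘ g ∘ h has a single +-orbital. -/
namespace Stmt8Aux

lemma mem_strictMono {f : Equiv.Perm ℚ} (hf : f ∈ QAut) : StrictMono f := by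
  intro x y hxy
  rcases lt_or_ge (f x) (f y) with h1 | h1
  · exact h1
  · exact absurd ((hf y x).mpr h1) (not_le.mpr hxy)

lemma apply_zpow (f : Equiv.Perm ℚ) (k : ℤ) (x : ℚ) :
    f ((f ^ k) x) = (f ^ (k + 1)) x := by
  rw [add_comm, zpow_add, zpow_one]
  rfl

lemma zpow_zpow (f : Equiv.Perm ℚ) (i j : ℤ) (x : ℚ) :
    (f ^ i) ((f ^ j) x) = (f ^ (i + j)) x := by
  rw [zpow_add]
  rfl

lemma orbit_succ_pos {f : Equiv.Perm ℚ} (hf : f ∈ QAut) {a : ℚ} (ha : a < f a) (j : ℤ) :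
    (f ^ j) a < (f ^ (j + 1)) a := by
  have h1 : (f ^ (j + 1)) a = (f ^ j) (f a) := by rw [zpow_add_one]; rfl
  rw [h1]
  exact mem_strictMono (zpow_mem hf j) ha

lemma orbit_succ_neg {f : Equiv.Perm ℚ} (hf : f ∈ QAut) {b : ℚ} (hb : f b < b) (j : ℤ) :
    (f ^ (j + 1)) b < (f ^ j) b := by
  have h1 : (f ^ (j + 1)) b = (f ^ j) (f b) := by rw [zpow_add_one]; rfl
  rw [h1]
  exact mem_strictMono (zpow_mem hf j) hb

lemma orbit_mono_pos {f : Equiv.Perm ℚ} (hf : f ∈ QAut) {a : ℚ} (ha : a < f a) :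
    StrictMono (fun j : ℤ => (f ^ j) a) :=
  strictMono_int_of_lt_succ (orbit_succ_pos hf ha)

lemma orbit_anti_neg {f : Equiv.Perm ℚ} (hf : f ∈ QAut) {b : ℚ} (hb : f b < b) :
    StrictAnti (fun j : ℤ => (f ^ j) b) :=
  strictAnti_int_of_succ_lt (orbit_succ_neg hf hb)

/-- A good sequence: strictly monotone and unbounded both ways. -/
def Good (z : ℤ → ℚ) : Prop :=
  StrictMono z ∧ (∀ x : ℚ, ∃ n, z n < x) ∧ (∀ x : ℚ, ∃ n, x < z n)

lemma exists_idx {z : ℤ → ℚ} (hz : Good z) (x : ℚ) :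
    ∃ n : ℤ, z n ≤ x ∧ x < z (n + 1) := by
  obtain ⟨hm, hb, ht⟩ := hz
  obtain ⟨M, hM⟩ := ht x
  obtain ⟨m, hmx⟩ := hb x
  obtain ⟨n, hn1, hn2⟩ := Int.exists_greatest_of_bdd
    (P := fun n => z n ≤ x)
    ⟨M, fun k hk => le_of_lt (hm.lt_iff_lt.mp (lt_of_le_of_lt hk hM))⟩
    ⟨m, hmx.le⟩
  refine ⟨n, hn1, ?_⟩
  by_contra h
  exact absurd (hn2 (n + 1) (not_lt.mp h)) (by omega)

noncomputable def idx {z : ℤ → ℚ} (hz : Good z) (x : ℚ) : ℤ := (exists_idx hz x).choose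

lemma idx_le {z : ℤ → ℚ} (hz : Good z) (x : ℚ) : z (idx hz x) ≤ x :=
  (exists_idx hz x).choose_spec.1

lemma lt_idx_succ {z : ℤ → ℚ} (hz : Good z) (x : ℚ) : x < z (idx hz x + 1) :=
  (exists_idx hz x).choose_spec.2

lemma idx_unique {z : ℤ → ℚ} (hz : Good z) {x : ℚ} {n : ℤ}
    (h1 : z n ≤ x) (h2 : x < z (n + 1)) : idx hz x = n := by
  have a1 := idx_le hz x
  have a2 := lt_idx_succ hz x
  by_contra hne
  rcases lt_or_gt_of_ne hne with h | h
  · have hle : z (idx hz x + 1) ≤ z n := hz.1.monotone (by omega)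
    linarith
  · have hle : z (n + 1) ≤ z (idx hz x) := hz.1.monotone (by omega)
    linarith

/-- Affine interpolation mapping `[z n, z (n+1)]` to `[w n, w (n+1)]`. -/
def interp (z w : ℤ → ℚ) (n : ℤ) (x : ℚ) : ℚ :=
  w n + (x - z n) * ((w (n + 1) - w n) / (z (n + 1) - z n))

lemma interp_z (z w : ℤ → ℚ) (n : ℤ) : interp z w n (z n) = w n := by
  simp [interp]

lemma interp_lt (z w : ℤ → ℚ) (n : ℤ) (hdz : z n < z (n + 1)) (hdw : w n < w (n + 1))
    {x y : ℚ} (hxy : x < y) : interp z w n x < interp z w n y := by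
  have hs : 0 < (w (n + 1) - w n) / (z (n + 1) - z n) :=
    div_pos (by linarith) (by linarith)
  have := mul_lt_mul_of_pos_right (show x - z n < y - z n by linarith) hs
  unfold interp
  linarith

lemma interp_lower (z w : ℤ → ℚ) (n : ℤ) (hdz : z n < z (n + 1)) (hdw : w n < w (n + 1))
    {x : ℚ} (hx : z n ≤ x) : w n ≤ interp z w n x := by
  have hs : 0 < (w (n + 1) - w n) / (z (n + 1) - z n) :=
    div_pos (by linarith) (by linarith)
  have := mul_nonneg (show (0:ℚ) ≤ x - z n by linarith) hs.le
  unfold interp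
  linarith

lemma interp_upper (z w : ℤ → ℚ) (n : ℤ) (hdz : z n < z (n + 1)) (hdw : w n < w (n + 1))
    {x : ℚ} (hx : x < z (n + 1)) : interp z w n x < w (n + 1) := by
  have hs : 0 < (w (n + 1) - w n) / (z (n + 1) - z n) :=
    div_pos (by linarith) (by linarith)
  have key := mul_lt_mul_of_pos_right (show x - z n < z (n + 1) - z n by linarith) hs
  have heq : (z (n + 1) - z n) * ((w (n + 1) - w n) / (z (n + 1) - z n)) = w (n + 1) - w n := by
    rw [mul_comm]
    exact div_mul_cancel₀ _ (show z (n + 1) - z n ≠ 0 by linarith)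
  rw [heq] at key
  unfold interp
  linarith

lemma interp_inv (z w : ℤ → ℚ) (n : ℤ) (hdz : z n < z (n + 1)) (hdw : w n < w (n + 1))
    (x : ℚ) : interp w z n (interp z w n x) = x := by
  have h1 : z (n + 1) - z n ≠ 0 := by linarith
  have h2 : w (n + 1) - w n ≠ 0 := by linarith
  unfold interp
  field_simp
  ring


noncomputable def pw {z : ℤ → ℚ} (hz : Good z) (w : ℤ → ℚ) (x : ℚ) : ℚ :=
  interp z w (idx hz x) x

lemma pw_z {z : ℤ → ℚ} (hz : Good z) (w : ℤ → ℚ) (n : ℤ) : pw hz w (z n) = w n := by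
  have h : idx hz (z n) = n := idx_unique hz le_rfl (hz.1 (lt_add_one n))
  unfold pw
  rw [h, interp_z]

lemma pw_mem {z w : ℤ → ℚ} (hz : Good z) (hw : Good w) (x : ℚ) :
    w (idx hz x) ≤ pw hz w x ∧ pw hz w x < w (idx hz x + 1) :=
  ⟨interp_lower z w _ (hz.1 (lt_add_one _)) (hw.1 (lt_add_one _)) (idx_le hz x),
   interp_upper z w _ (hz.1 (lt_add_one _)) (hw.1 (lt_add_one _)) (lt_idx_succ hz x)⟩

lemma pw_strictMono {z w : ℤ → ℚ} (hz : Good z) (hw : Good w) :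
    StrictMono (pw hz w) := by
  intro x y hxy
  have hnm : idx hz x ≤ idx hz y := by
    by_contra hc
    push_neg at hc
    have h1 : z (idx hz x) ≤ x := idx_le hz x
    have h2 : y < z (idx hz y + 1) := lt_idx_succ hz y
    have h3 : z (idx hz y + 1) ≤ z (idx hz x) := hz.1.monotone (by omega)
    linarith
  rcases eq_or_lt_of_le hnm with he | hlt
  · unfold pw
    rw [← he]
    exact interp_lt z w _ (hz.1 (lt_add_one _)) (hw.1 (lt_add_one _)) hxy
  · have h1 : pw hz w x < w (idx hz x + 1) := (pw_mem hz hw x).2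
    have h2 : w (idx hz y) ≤ pw hz w y := (pw_mem hz hw y).1
    have h3 : w (idx hz x + 1) ≤ w (idx hz y) := hw.1.monotone (by omega)
    linarith

lemma idx_pw {z w : ℤ → ℚ} (hz : Good z) (hw : Good w) (x : ℚ) :
    idx hw (pw hz w x) = idx hz x :=
  idx_unique hw (pw_mem hz hw x).1 (pw_mem hz hw x).2

lemma pw_pw {z w : ℤ → ℚ} (hz : Good z) (hw : Good w) (x : ℚ) :
    pw hw z (pw hz w x) = x := by
  have h := idx_pw hz hw x
  unfold pw at h ⊢
  rw [h]
  exact interp_inv z w _ (hz.1 (lt_add_one _)) (hw.1 (lt_add_one _)) x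

noncomputable def pwEquiv {z w : ℤ → ℚ} (hz : Good z) (hw : Good w) : Equiv.Perm ℚ where
  toFun := pw hz w
  invFun := pw hw z
  left_inv := pw_pw hz hw
  right_inv := pw_pw hw hz

lemma pwEquiv_apply {z w : ℤ → ℚ} (hz : Good z) (hw : Good w) (n : ℤ) :
    pwEquiv hz hw (z n) = w n := pw_z hz w n

lemma pwEquiv_mem {z w : ℤ → ℚ} (hz : Good z) (hw : Good w) : pwEquiv hz hw ∈ QAut :=
  fun a b => ((pw_strictMono hz hw).le_iff_le).symm

lemma orbit_eq (e : Equiv.Perm ℚ) (z : ℤ → ℚ) (hstep : ∀ n, e (z n) = z (n + 1)) :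
    ∀ (k : ℤ) (n : ℤ), (e ^ k) (z n) = z (n + k) := by
  have hinv : ∀ n, e⁻¹ (z n) = z (n - 1) := by
    intro n
    have := hstep (n - 1)
    rw [show n - 1 + 1 = n by ring] at this
    rw [← this, Equiv.Perm.inv_def, Equiv.symm_apply_apply]
  intro k
  induction k using Int.induction_on with
  | zero => simp
  | succ k ih =>
    intro n
    have h1 : e ^ ((k : ℤ) + 1) = e * e ^ (k : ℤ) := by
      rw [add_comm, zpow_add, zpow_one]
    rw [h1, Equiv.Perm.mul_apply, ih n, hstep]
    ring_nf
  | pred k ih =>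
    intro n
    have h1 : e ^ (-(k : ℤ) - 1) = e⁻¹ * e ^ (-(k : ℤ)) := by
      rw [sub_eq_add_neg, add_comm, zpow_add, zpow_neg_one]
    rw [h1, Equiv.Perm.mul_apply, ih n, hinv]
    ring_nf

end Stmt8Aux


/-- If `g ∈ Aut(ℚ, ≤)` has a `+`-orbital unbounded above and a
`−`-orbital unbounded below, then there is `h ∈ Aut(ℚ, ≤)` such that the commutator
`g⁻¹ ∘ h⁻¹ ∘ g ∘ h` has a single `+`-orbital. -/
theorem stmt8 (g : QAut)
    (h1 : PlusUnbAboveQ (g : Equiv.Perm ℚ))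
    (h2 : MinusUnbBelowQ (g : Equiv.Perm ℚ)) :
    ∃ h : QAut, SinglePlusQ ((g⁻¹ * h⁻¹ * g * h : QAut) : Equiv.Perm ℚ) := by
  classical
  obtain ⟨a, ha1, ha2⟩ := h1
  obtain ⟨b, hb1, hb2⟩ := h2
  set f : Equiv.Perm ℚ := (g : Equiv.Perm ℚ) with hfdef
  have hf : f ∈ QAut := g.2
  have fzpow_mono : ∀ k : ℤ, StrictMono ((f ^ k : Equiv.Perm ℚ) : ℚ → ℚ) :=
    fun k => Stmt8Aux.mem_strictMono (zpow_mem hf k)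
  have amono' : ∀ {i j : ℤ}, i ≤ j → (f ^ i) a ≤ (f ^ j) a := by
    intro i j hij
    simpa using (Stmt8Aux.orbit_mono_pos hf ha1).monotone hij
  have bmono' : ∀ {i j : ℤ}, i ≤ j → (f ^ j) b ≤ (f ^ i) b := by
    intro i j hij
    simpa using (Stmt8Aux.orbit_anti_neg hf hb1).antitone hij
  obtain ⟨N, hN⟩ := ha2 b
  set A : ℚ := (f ^ N) a with hAdef
  have hA : A < f A := by
    have h := Stmt8Aux.orbit_succ_pos hf ha1 N
    rwa [← Stmt8Aux.apply_zpow] at h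
  set Q : ℚ := (f b + b) / 2 with hQdef
  have hQ1 : f b < Q := by rw [hQdef]; linarith
  have hQ2 : Q < b := by rw [hQdef]; linarith
  set W1 : ℚ := (A + f A) / 2 with hW1def
  have hw01 : A < W1 := by rw [hW1def]; linarith
  have hw1 : W1 < f A := by rw [hW1def]; linarith
  -- the two sequences
  set z : ℤ → ℚ := fun n => if 1 ≤ n then (f ^ (n - 1)) A
      else if Even n then (f ^ ((-n) / 2)) b else (f ^ ((-n) / 2)) Q with hzdef
  set w : ℤ → ℚ := fun n => if 0 ≤ n then
        (if Even n then (f ^ (n / 2)) A else (f ^ (n / 2)) W1)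
      else (f ^ (-1 - n)) b with hwdef
  -- evaluation lemmas
  have hz_pos : ∀ n : ℤ, 1 ≤ n → z n = (f ^ (n - 1)) A := by
    intro n hn
    simp only [hzdef]
    rw [if_pos hn]
  have hz_even : ∀ k : ℤ, 0 ≤ k → z (-(2 * k)) = (f ^ k) b := by
    intro k hk
    have h1 : ¬ (1 ≤ -(2 * k)) := by omega
    have h2 : Even (-(2 * k)) := ⟨-k, by ring⟩
    have h3 : (-(-(2 * k))) / 2 = k := by omega
    simp only [hzdef]
    rw [if_neg h1, if_pos h2, h3]
  have hz_odd : ∀ k : ℤ, 0 ≤ k → z (-(2 * k + 1)) = (f ^ k) Q := by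
    intro k hk
    have h1 : ¬ (1 ≤ -(2 * k + 1)) := by omega
    have h2 : ¬ Even (-(2 * k + 1)) := by rintro ⟨r, hr⟩; omega
    have h3 : (-(-(2 * k + 1))) / 2 = k := by omega
    simp only [hzdef]
    rw [if_neg h1, if_neg h2, h3]
  have hw_even : ∀ k : ℤ, 0 ≤ k → w (2 * k) = (f ^ k) A := by
    intro k hk
    have h1 : (0:ℤ) ≤ 2 * k := by omega
    have h2 : Even (2 * k) := ⟨k, by ring⟩
    have h3 : (2 * k) / 2 = k := by omega
    simp only [hwdef]
    rw [if_pos h1, if_pos h2, h3]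
  have hw_odd : ∀ k : ℤ, 0 ≤ k → w (2 * k + 1) = (f ^ k) W1 := by
    intro k hk
    have h1 : (0:ℤ) ≤ 2 * k + 1 := by omega
    have h2 : ¬ Even (2 * k + 1) := by rintro ⟨r, hr⟩; omega
    have h3 : (2 * k + 1) / 2 = k := by omega
    simp only [hwdef]
    rw [if_pos h1, if_neg h2, h3]
  have hw_neg : ∀ n : ℤ, n ≤ -1 → w n = (f ^ (-1 - n)) b := by
    intro n hn
    have h1 : ¬ (0:ℤ) ≤ n := by omega
    simp only [hwdef]
    rw [if_neg h1]
  -- z is strictly monotone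
  have hzmono : StrictMono z := by
    apply strictMono_int_of_lt_succ
    intro n
    rcases le_or_gt 1 n with hn | hn
    · rw [hz_pos n hn, hz_pos (n + 1) (by omega)]
      have h := Stmt8Aux.orbit_succ_pos hf hA (n - 1)
      rwa [show n - 1 + 1 = n + 1 - 1 by ring] at h
    · obtain ⟨k, hk | hk⟩ := Int.even_or_odd' (-n)
      · have hk0 : 0 ≤ k := by omega
        have hzn : z n = (f ^ k) b := by
          rw [show n = -(2 * k) by omega]
          exact hz_even k hk0
        rcases eq_or_lt_of_le hk0 with hk1 | hk1
        · have h4 : z (n + 1) = A := by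
            rw [show n + 1 = (1:ℤ) by omega, hz_pos 1 le_rfl]
            simp
          rw [hzn, h4, ← hk1]
          simpa using hN
        · have h4 : z (n + 1) = (f ^ (k - 1)) Q := by
            rw [show n + 1 = -(2 * (k - 1) + 1) by omega]
            exact hz_odd (k - 1) (by omega)
          rw [hzn, h4]
          have h5 : (f ^ k) b = (f ^ (k - 1)) (f b) := by
            have h6 := zpow_add_one f (k - 1)
            rw [show k - 1 + 1 = k by ring] at h6
            rw [h6]
            rfl
          rw [h5]
          exact fzpow_mono (k - 1) hQ1
      · have hk0 : 0 ≤ k := by omega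
        have hzn : z n = (f ^ k) Q := by
          rw [show n = -(2 * k + 1) by omega]
          exact hz_odd k hk0
        have h4 : z (n + 1) = (f ^ k) b := by
          rw [show n + 1 = -(2 * k) by omega]
          exact hz_even k hk0
        rw [hzn, h4]
        exact fzpow_mono k hQ2
  -- z is unbounded below and above
  have hz_below : ∀ x : ℚ, ∃ n, z n < x := by
    intro x
    obtain ⟨k, hk⟩ := hb2 x
    refine ⟨-(2 * max k 0), ?_⟩
    rw [hz_even (max k 0) (le_max_right _ _)]
    have h5 : (f ^ (max k 0)) b ≤ (f ^ k) b := bmono' (le_max_left _ _)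
    linarith
  have hz_above : ∀ x : ℚ, ∃ n, x < z n := by
    intro x
    obtain ⟨k, hk⟩ := ha2 x
    refine ⟨max 1 (k - N + 1), ?_⟩
    rw [hz_pos _ (le_max_left _ _), hAdef, Stmt8Aux.zpow_zpow]
    have h6 := le_max_right 1 (k - N + 1)
    have h5 : (f ^ k) a ≤ (f ^ (max 1 (k - N + 1) - 1 + N)) a := amono' (by omega)
    linarith
  -- w is strictly monotone
  have hwmono : StrictMono w := by
    apply strictMono_int_of_lt_succ
    intro n
    rcases le_or_gt 0 n with hn | hn
    · obtain ⟨k, hk | hk⟩ := Int.even_or_odd' n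
      · have hk0 : 0 ≤ k := by omega
        have e1 : w n = (f ^ k) A := by rw [hk]; exact hw_even k hk0
        have e2 : w (n + 1) = (f ^ k) W1 := by
          rw [show n + 1 = 2 * k + 1 by omega]
          exact hw_odd k hk0
        rw [e1, e2]
        exact fzpow_mono k hw01
      · have hk0 : 0 ≤ k := by omega
        have e1 : w n = (f ^ k) W1 := by rw [hk]; exact hw_odd k hk0
        have e2 : w (n + 1) = (f ^ (k + 1)) A := by
          rw [show n + 1 = 2 * (k + 1) by omega]
          exact hw_even (k + 1) (by omega)
        rw [e1, e2]
        have h5 : (f ^ (k + 1)) A = (f ^ k) (f A) := by rw [zpow_add_one]; rfl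
        rw [h5]
        exact fzpow_mono k hw1
    · rcases eq_or_lt_of_le (show n ≤ -1 by omega) with hn1 | hn1
      · have e1 : w n = b := by
          rw [hw_neg n (by omega), show -1 - n = (0:ℤ) by omega]
          simp
        have e2 : w (n + 1) = A := by
          rw [show n + 1 = 2 * (0:ℤ) by omega, hw_even 0 le_rfl]
          simp
        rw [e1, e2]
        exact hN
      · have e1 : w n = (f ^ (-1 - n)) b := hw_neg n (by omega)
        have e2 : w (n + 1) = (f ^ (-2 - n)) b := by
          rw [hw_neg (n + 1) (by omega), show -1 - (n + 1) = -2 - n by ring]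
        rw [e1, e2]
        have h5 := Stmt8Aux.orbit_succ_neg hf hb1 (-2 - n)
        rwa [show -2 - n + 1 = -1 - n by ring] at h5
  -- w is unbounded below and above
  have hw_below : ∀ x : ℚ, ∃ n, w n < x := by
    intro x
    obtain ⟨k, hk⟩ := hb2 x
    refine ⟨-1 - max k 0, ?_⟩
    rw [hw_neg _ (by have := le_max_right k 0; omega),
      show -1 - (-1 - max k 0) = max k 0 by ring]
    have h5 : (f ^ (max k 0)) b ≤ (f ^ k) b := bmono' (le_max_left _ _)
    linarith
  have hw_above : ∀ x : ℚ, ∃ n, x < w n := by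
    intro x
    obtain ⟨k, hk⟩ := ha2 x
    refine ⟨2 * max 0 (k - N), ?_⟩
    rw [hw_even _ (le_max_left _ _), hAdef, Stmt8Aux.zpow_zpow]
    have h6 := le_max_right 0 (k - N)
    have h5 : (f ^ k) a ≤ (f ^ (max 0 (k - N) + N)) a := amono' (by omega)
    linarith
  have hzGood : Stmt8Aux.Good z := ⟨hzmono, hz_below, hz_above⟩
  have hwGood : Stmt8Aux.Good w := ⟨hwmono, hw_below, hw_above⟩
  refine ⟨⟨Stmt8Aux.pwEquiv hzGood hwGood, Stmt8Aux.pwEquiv_mem hzGood hwGood⟩, ?_⟩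
  set E : Equiv.Perm ℚ := Stmt8Aux.pwEquiv hzGood hwGood with hEdef
  have hEz : ∀ n, E (z n) = w n := Stmt8Aux.pwEquiv_apply hzGood hwGood
  set C : Equiv.Perm ℚ :=
    ((g⁻¹ * ⟨E, Stmt8Aux.pwEquiv_mem hzGood hwGood⟩⁻¹ * g *
      ⟨E, Stmt8Aux.pwEquiv_mem hzGood hwGood⟩ : QAut) : Equiv.Perm ℚ) with hCdef
  have hCapp : ∀ x : ℚ, C x = f⁻¹ (E⁻¹ (f (E x))) := fun x => rfl
  have hstep : ∀ n : ℤ, C (z n) = z (n + 1) := by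
    intro n
    rcases le_or_gt 0 n with hn | hn
    · have e2 : f (z (n + 1)) = z (n + 2) := by
        rw [hz_pos (n + 1) (by omega), hz_pos (n + 2) (by omega),
          show n + 2 - 1 = n + 1 - 1 + 1 by ring, ← Stmt8Aux.apply_zpow]
      have e1 : f (w n) = w (n + 2) := by
        obtain ⟨k, hk | hk⟩ := Int.even_or_odd' n
        · have hk0 : 0 ≤ k := by omega
          have u1 : w n = (f ^ k) A := by rw [hk]; exact hw_even k hk0
          have u2 : w (n + 2) = (f ^ (k + 1)) A := by
            rw [show n + 2 = 2 * (k + 1) by omega]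
            exact hw_even (k + 1) (by omega)
          rw [u1, u2, Stmt8Aux.apply_zpow]
        · have hk0 : 0 ≤ k := by omega
          have u1 : w n = (f ^ k) W1 := by rw [hk]; exact hw_odd k hk0
          have u2 : w (n + 2) = (f ^ (k + 1)) W1 := by
            rw [show n + 2 = 2 * (k + 1) + 1 by omega]
            exact hw_odd (k + 1) (by omega)
          rw [u1, u2, Stmt8Aux.apply_zpow]
      calc C (z n) = f⁻¹ (E⁻¹ (f (E (z n)))) := hCapp _
        _ = f⁻¹ (E⁻¹ (f (w n))) := by rw [hEz]
        _ = f⁻¹ (E⁻¹ (w (n + 2))) := by rw [e1]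
        _ = f⁻¹ (E⁻¹ (E (z (n + 2)))) := by rw [hEz]
        _ = f⁻¹ (z (n + 2)) := by simp only [Equiv.Perm.inv_def, Equiv.symm_apply_apply]
        _ = f⁻¹ (f (z (n + 1))) := by rw [e2]
        _ = z (n + 1) := by simp only [Equiv.Perm.inv_def, Equiv.symm_apply_apply]
    · have e2 : f (z (n + 1)) = z (n - 1) := by
        obtain ⟨k, hk | hk⟩ := Int.even_or_odd' (-(n + 1))
        · have hk0 : 0 ≤ k := by omega
          have u1 : z (n + 1) = (f ^ k) b := by
            rw [show n + 1 = -(2 * k) by omega]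
            exact hz_even k hk0
          have u2 : z (n - 1) = (f ^ (k + 1)) b := by
            rw [show n - 1 = -(2 * (k + 1)) by omega]
            exact hz_even (k + 1) (by omega)
          rw [u1, u2, Stmt8Aux.apply_zpow]
        · have hk0 : 0 ≤ k := by omega
          have u1 : z (n + 1) = (f ^ k) Q := by
            rw [show n + 1 = -(2 * k + 1) by omega]
            exact hz_odd k hk0
          have u2 : z (n - 1) = (f ^ (k + 1)) Q := by
            rw [show n - 1 = -(2 * (k + 1) + 1) by omega]
            exact hz_odd (k + 1) (by omega)
          rw [u1, u2, Stmt8Aux.apply_zpow]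
      have e1 : f (w n) = w (n - 1) := by
        rw [hw_neg n (by omega), hw_neg (n - 1) (by omega), Stmt8Aux.apply_zpow,
          show -1 - n + 1 = -1 - (n - 1) by ring]
      calc C (z n) = f⁻¹ (E⁻¹ (f (E (z n)))) := hCapp _
        _ = f⁻¹ (E⁻¹ (f (w n))) := by rw [hEz]
        _ = f⁻¹ (E⁻¹ (w (n - 1))) := by rw [e1]
        _ = f⁻¹ (E⁻¹ (E (z (n - 1)))) := by rw [hEz]
        _ = f⁻¹ (z (n - 1)) := by simp only [Equiv.Perm.inv_def, Equiv.symm_apply_apply]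
        _ = f⁻¹ (f (z (n + 1))) := by rw [e2]
        _ = z (n + 1) := by simp only [Equiv.Perm.inv_def, Equiv.symm_apply_apply]
  have horb := Stmt8Aux.orbit_eq C z hstep
  refine ⟨z 0, ?_, ?_, ?_⟩
  · rw [hstep 0]
    exact hzmono (by omega)
  · intro x
    obtain ⟨n, hx⟩ := hz_above x
    exact ⟨n, by rw [horb n 0, zero_add]; exact hx⟩
  · intro x
    obtain ⟨n, hx⟩ := hz_below x
    exact ⟨n, by rw [horb n 0, zero_add]; exact hx⟩
end

section
/- Let M be a universal n-linear order, let m ∈ {1, …, n}, and let g ∈ Aut(M) be such that for every x ∈ M there exists y with y <_m x and y <_m g y, and there exists z with x <_m z and z <_m g z. Then there exists h ∈ Aut(M) such that the automorphism g ∘ h⁻¹ ∘ g ∘ h has a single +-orbital with respect to <_m. -/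
/-- A set `M` equipped with `n` linear orders `<_1, …, <_n`. -/
structure NLinear (n : ℕ) (M : Type*) where
  lt : Fin n → M → M → Prop
  irrefl : ∀ i a, ¬ lt i a a
  trans : ∀ i a b c, lt i a b → lt i b c → lt i a c
  total : ∀ i a b, lt i a b ∨ a = b ∨ lt i b a

/-- `M` with its `n` linear orders is a universal `n`-linear order: it is countably
infinite and has the one-point extension property. -/
structure IsUniversalNLinear (n : ℕ) (M : Type*) (L : NLinear n M) : Prop where
  countable : Countable M
  infinite : Infinite M
  extension : ∀ (A : Finset M) (D : Fin n → Set M),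
    (∀ i, D i ⊆ ↑A) →
    (∀ i, ∀ a ∈ A, ∀ b ∈ A, L.lt i a b → b ∈ D i → a ∈ D i) →
    ∃ x, x ∉ A ∧ ∀ i, ∀ a ∈ A, (L.lt i a x ↔ a ∈ D i)

/-- The automorphism group of an `n`-linearly ordered set, as a subgroup of `Equiv.Perm M`. -/
def NLinear.aut {n : ℕ} {M : Type*} (L : NLinear n M) : Subgroup (Equiv.Perm M) where
  carrier := {g | ∀ i a b, L.lt i a b ↔ L.lt i (g a) (g b)}
  one_mem' := fun _ _ _ => Iff.rfl
  mul_mem' := by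
    intro g h hg hh i a b
    exact (hh i a b).trans (hg i (h a) (h b))
  inv_mem' := by
    intro g hg i a b
    simpa using (hg i (g⁻¹ a) (g⁻¹ b)).symm

/-- `f` has a single `+`-orbital with respect to `<_m`. -/
def NLinear.SinglePlus {n : ℕ} {M : Type*} (L : NLinear n M) (m : Fin n)
    (f : Equiv.Perm M) : Prop :=
  ∃ a : M, L.lt m a (f a) ∧ (∀ x : M, ∃ k : ℤ, L.lt m x ((f ^ k) a)) ∧
    (∀ x : M, ∃ k : ℤ, L.lt m ((f ^ k) a) x)

/-- `f` has a single `−`-orbital with respect to `<_m`. -/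
def NLinear.SingleMinus {n : ℕ} {M : Type*} (L : NLinear n M) (m : Fin n)
    (f : Equiv.Perm M) : Prop :=
  ∃ a : M, L.lt m (f a) a ∧ (∀ x : M, ∃ k : ℤ, L.lt m x ((f ^ k) a)) ∧
    (∀ x : M, ∃ k : ℤ, L.lt m ((f ^ k) a) x)

/-- `f` has a `+`-orbital unbounded above with respect to `<_m`. -/
def NLinear.PlusUnbAbove {n : ℕ} {M : Type*} (L : NLinear n M) (m : Fin n)
    (f : Equiv.Perm M) : Prop :=
  ∃ a : M, L.lt m a (f a) ∧ ∀ x : M, ∃ k : ℤ, L.lt m x ((f ^ k) a)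

/-- `f` has a `−`-orbital unbounded below with respect to `<_m`. -/
def NLinear.MinusUnbBelow {n : ℕ} {M : Type*} (L : NLinear n M) (m : Fin n)
    (f : Equiv.Perm M) : Prop :=
  ∃ b : M, L.lt m (f b) b ∧ ∀ x : M, ∃ k : ℤ, L.lt m ((f ^ k) b) x

/-!
Write `F = g h⁻¹ g h`. The automorphism `h` is built by back-and-forth as the union of a chain of
finite partial isomorphisms, while an `F`-orbit is grown at both ends. At the top end `t` put
`h t = b` with `b <_m g b` above everything used so far, and then `h d = g b` for a fresh `d` above
everything; this forces `F t = g d`, again above everything. The bottom end is the same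
construction for `g⁻¹` and the reversed orders. The hypothesis on `g` and the one-point extension
property allow each new point to be chosen beyond the next point of an enumeration of `M`, so the
orbit is unbounded in both directions.
-/

namespace NLinear

variable {n : ℕ} {M : Type*} (L : NLinear n M) {i : Fin n} {a b c : M}

theorem lt_trans (hab : L.lt i a b) (hbc : L.lt i b c) : L.lt i a c :=
  L.trans i a b c hab hbc

theorem lt_asymm (hab : L.lt i a b) : ¬ L.lt i b a :=
  fun hba => L.irrefl i a (L.lt_trans hab hba)

theorem ne_of_lt (hab : L.lt i a b) : a ≠ b := by
  rintro rfl
  exact L.irrefl i a hab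

theorem lt_iff_not_lt (hab : a ≠ b) : L.lt i a b ↔ ¬ L.lt i b a :=
  ⟨L.lt_asymm, fun hba => (L.total i a b).resolve_right (not_or.mpr ⟨hab, hba⟩)⟩

def dual : NLinear n M where
  lt i a b := L.lt i b a
  irrefl := L.irrefl
  trans i a b c hab hbc := L.trans i c b a hbc hab
  total i a b := (L.total i b a).imp_right (Or.imp_left Eq.symm)

theorem aut_dual : L.dual.aut = L.aut := by
  ext g
  exact forall_congr' fun _ => forall_comm

/-- `P` is the graph of an isomorphism between two finite subsets of `M`. -/
def IsPartialIso (P : Finset (M × M)) : Prop :=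
  ∀ p ∈ P, ∀ q ∈ P, (p.1 = q.1 ↔ p.2 = q.2) ∧ ∀ i, (L.lt i p.1 q.1 ↔ L.lt i p.2 q.2)

variable {L} {P : Finset (M × M)} {x : M}

theorem isPartialIso_dual : L.dual.IsPartialIso P ↔ L.IsPartialIso P :=
  ⟨fun h p hp q hq => ⟨(h p hp q hq).1, (h q hq p hp).2⟩,
    fun h p hp q hq => ⟨(h p hp q hq).1, (h q hq p hp).2⟩⟩

variable (L) in
/-- The cut of `x` over the domain of `P` in the order `<_i`, transported to the range of `P`. -/
def imageCut (P : Finset (M × M)) (x : M) (i : Fin n) : Set M :=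
  {c | ∃ q ∈ P, L.lt i q.1 x ∧ q.2 = c}

theorem IsPartialIso.mem_imageCut (hP : L.IsPartialIso P) {q : M × M} (hq : q ∈ P) :
    q.2 ∈ L.imageCut P x i ↔ L.lt i q.1 x :=
  ⟨fun ⟨p, hp, hpx, hpq⟩ => (hP p hp q hq).1.mpr hpq ▸ hpx, fun h => ⟨q, hq, h, rfl⟩⟩

variable [DecidableEq M]

theorem IsPartialIso.insert_of_forall_lt_iff (hP : L.IsPartialIso P) (hx : ∀ q ∈ P, q.1 ≠ x)
    (hb : ∀ q ∈ P, q.2 ≠ b) (hxb : ∀ i, ∀ q ∈ P, L.lt i q.1 x ↔ L.lt i q.2 b) :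
    L.IsPartialIso (insert (x, b) P) := by
  have hbx : ∀ i, ∀ q ∈ P, L.lt i x q.1 ↔ L.lt i b q.2 := fun i q hq => by
    rw [L.lt_iff_not_lt (hx q hq).symm, L.lt_iff_not_lt (hb q hq).symm, hxb i q hq]
  intro p hp q hq
  rw [Finset.mem_insert] at hp hq
  rcases hp with rfl | hp <;> rcases hq with rfl | hq
  · exact ⟨iff_of_true rfl rfl, fun i => iff_of_false (L.irrefl i _) (L.irrefl i _)⟩
  · exact ⟨iff_of_false (hx q hq).symm (hb q hq).symm, fun i => hbx i q hq⟩
  · exact ⟨iff_of_false (hx p hp) (hb p hp), fun i => hxb i p hp⟩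
  · exact hP p hp q hq

theorem IsPartialIso.image_swap (hP : L.IsPartialIso P) : L.IsPartialIso (P.image Prod.swap) := by
  intro p hp q hq
  obtain ⟨p', hp', rfl⟩ := Finset.mem_image.mp hp
  obtain ⟨q', hq', rfl⟩ := Finset.mem_image.mp hq
  exact ⟨(hP p' hp' q' hq').1.symm, fun i => ((hP p' hp' q' hq').2 i).symm⟩

theorem IsPartialIso.of_insert_image_swap {y : M}
    (h : L.IsPartialIso (insert (y, a) (P.image Prod.swap))) :
    L.IsPartialIso (insert (a, y) P) := by
  simpa [Finset.image_insert, Finset.image_image] using h.image_swap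

theorem imageCut_subset : L.imageCut P x i ⊆ ↑(P.image Prod.snd) := by
  rintro _ ⟨q, hq, -, rfl⟩
  exact Finset.mem_coe.mpr (Finset.mem_image_of_mem _ hq)

theorem IsPartialIso.imageCut_downward (hP : L.IsPartialIso P) :
    ∀ c ∈ P.image Prod.snd, ∀ c' ∈ P.image Prod.snd, L.lt i c c' →
      c' ∈ L.imageCut P x i → c ∈ L.imageCut P x i := by
  rintro _ hc _ - hcc' ⟨q, hq, hqx, rfl⟩
  obtain ⟨p, hp, rfl⟩ := Finset.mem_image.mp hc
  exact ⟨p, hp, L.lt_trans (((hP p hp q hq).2 i).mpr hcc') hqx, rfl⟩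

theorem IsPartialIso.insert_of_realizes (hP : L.IsPartialIso P) (hx : ∀ q ∈ P, q.1 ≠ x)
    (hbP : b ∉ P.image Prod.snd)
    (hb : ∀ i, ∀ c ∈ P.image Prod.snd, L.lt i c b ↔ c ∈ L.imageCut P x i) :
    L.IsPartialIso (insert (x, b) P) :=
  hP.insert_of_forall_lt_iff hx (fun q hq h => hbP (h ▸ Finset.mem_image_of_mem Prod.snd hq))
    fun i q hq => by
      rw [hb i q.2 (Finset.mem_image_of_mem _ hq), hP.mem_imageCut hq]

end NLinear

namespace IsUniversalNLinear

open NLinear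

variable {n : ℕ} {M : Type*} {L : NLinear n M} (hL : IsUniversalNLinear n M L) {m : Fin n}

include hL

theorem dual : IsUniversalNLinear n M L.dual where
  countable := hL.countable
  infinite := hL.infinite
  extension A D hDA hD := by
    obtain ⟨x, hxA, hx⟩ := hL.extension A (fun i => ↑A \ D i) (fun _ => Set.sdiff_subset)
      fun i a ha b hb hab hbD => ⟨ha, fun haD => hbD.2 (hD i b hb a ha hab haD)⟩
    refine ⟨x, hxA, fun i a ha => ?_⟩
    have hxa : x ≠ a := fun h => hxA (h ▸ ha)
    change L.lt i x a ↔ a ∈ D i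
    rw [L.lt_iff_not_lt hxa, hx i a ha]
    exact ⟨fun h => by_contra fun haD => h ⟨ha, haD⟩, fun haD h => h.2 haD⟩

theorem exists_forall_lt (A : Finset M) (i : Fin n) : ∃ z, ∀ a ∈ A, L.lt i a z := by
  obtain ⟨z, -, hz⟩ := hL.extension A (fun _ => ↑A) (fun _ => subset_rfl)
    fun _ a ha _ _ _ _ => ha
  exact ⟨z, fun a ha => (hz i a ha).mpr ha⟩

theorem exists_between (A : Finset M) (D : Fin n → Set M) (hDA : ∀ i, D i ⊆ ↑A)
    (hD : ∀ i, ∀ a ∈ A, ∀ b ∈ A, L.lt i a b → b ∈ D i → a ∈ D i) {lo hi : M}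
    (hlohi : L.lt m lo hi) (hhi : ∀ a ∈ D m, L.lt m a hi)
    (hlo : ∀ a ∈ A, a ∉ D m → L.lt m lo a) :
    ∃ z ∉ A, L.lt m lo z ∧ L.lt m z hi ∧ ∀ i, ∀ a ∈ A, (L.lt i a z ↔ a ∈ D i) := by
  classical
  set A' := insert lo (insert hi A)
  -- the downward closure in `A'` of `D i`, with `lo` added in the order `<_m`
  let D' : Fin n → Set M := fun i =>
    {a | a ∈ A' ∧ ∃ c, (c ∈ D i ∨ (i = m ∧ c = lo)) ∧ (a = c ∨ L.lt i a c)}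
  have hD' : ∀ i, ∀ a ∈ A', ∀ b ∈ A', L.lt i a b → b ∈ D' i → a ∈ D' i := by
    rintro i a ha b - hab ⟨-, c, hc, rfl | hbc⟩
    exacts [⟨ha, b, hc, Or.inr hab⟩, ⟨ha, c, hc, Or.inr (L.lt_trans hab hbc)⟩]
  have hAA' : ∀ a ∈ A, a ∈ A' := fun a ha => Finset.mem_insert_of_mem (Finset.mem_insert_of_mem ha)
  have hloA' : lo ∈ A' := Finset.mem_insert_self _ _
  have hhiA' : hi ∈ A' := Finset.mem_insert_of_mem (Finset.mem_insert_self _ _)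
  have hD'D : ∀ i, ∀ a ∈ A, a ∈ D' i ↔ a ∈ D i := by
    refine fun i a ha => ⟨?_, fun h => ⟨hAA' a ha, a, Or.inl h, Or.inl rfl⟩⟩
    rintro ⟨-, c, hc | ⟨rfl, rfl⟩, hac⟩
    · rcases hac with rfl | hac
      exacts [hc, hD i a ha c (hDA i hc) hac hc]
    · by_contra haD
      rcases hac with rfl | hac
      exacts [L.irrefl i a (hlo a ha haD), L.lt_asymm hac (hlo a ha haD)]
  obtain ⟨z, hzA', hz⟩ := hL.extension A' D' (fun _ _ h => h.1) hD'
  have hloz : L.lt m lo z := (hz m lo hloA').mpr ⟨hloA', lo, Or.inr ⟨rfl, rfl⟩, Or.inl rfl⟩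
  have hhiz : ¬ L.lt m hi z := by
    rintro h
    obtain ⟨-, c, hc | ⟨-, rfl⟩, rfl | hic⟩ := (hz m hi hhiA').mp h
    · exact L.irrefl m hi (hhi hi hc)
    · exact L.lt_asymm hic (hhi c hc)
    · exact L.irrefl m hi hlohi
    · exact L.lt_asymm hic hlohi
  have hzhi : z ≠ hi := fun h => hzA' (h ▸ hhiA')
  exact ⟨z, fun h => hzA' (hAA' z h), hloz, (L.lt_iff_not_lt hzhi).mpr hhiz,
    fun i a ha => (hz i a (hAA' a ha)).trans (hD'D i a ha)⟩

variable [DecidableEq M] {P : Finset (M × M)} {x : M}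

theorem exists_insert (hP : L.IsPartialIso P) (hx : ∀ q ∈ P, q.1 ≠ x) :
    ∃ b, L.IsPartialIso (insert (x, b) P) := by
  obtain ⟨b, hbP, hb⟩ := hL.extension (P.image Prod.snd) (L.imageCut P x)
    (fun _ => imageCut_subset) (fun _ => hP.imageCut_downward)
  exact ⟨b, hP.insert_of_realizes hx hbP hb⟩

theorem exists_insert_between (hP : L.IsPartialIso P) (hx : ∀ q ∈ P, q.1 ≠ x) {lo hi : M}
    (hlohi : L.lt m lo hi) (hhi : ∀ q ∈ P, L.lt m q.1 x → L.lt m q.2 hi)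
    (hlo : ∀ q ∈ P, ¬ L.lt m q.1 x → L.lt m lo q.2) :
    ∃ b, L.lt m lo b ∧ L.lt m b hi ∧ L.IsPartialIso (insert (x, b) P) := by
  obtain ⟨b, hbP, hlob, hbhi, hb⟩ := hL.exists_between (P.image Prod.snd) (L.imageCut P x)
    (fun _ => imageCut_subset) (fun _ => hP.imageCut_downward) hlohi
    (by rintro _ ⟨q, hq, hqx, rfl⟩; exact hhi q hq hqx)
    (by
      intro c hc hcx
      obtain ⟨q, hq, rfl⟩ := Finset.mem_image.mp hc
      exact hlo q hq fun h => hcx ((hP.mem_imageCut hq).mpr h))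
  exact ⟨b, hlob, hbhi, hP.insert_of_realizes hx hbP hb⟩

theorem exists_insert_above {G : Equiv.Perm M} (hG : G ∈ L.aut)
    (hZ : ∀ x, ∃ z, L.lt m x z ∧ L.lt m z (G z)) (hP : L.IsPartialIso P)
    (hx : ∀ q ∈ P, L.lt m q.1 x) (E : Finset M) :
    ∃ b, (∀ e ∈ E, L.lt m e b) ∧ (∀ q ∈ P, L.lt m q.2 b) ∧ L.lt m b (G b) ∧
      L.IsPartialIso (insert (x, b) P) := by
  obtain ⟨y, hy⟩ := hL.exists_forall_lt (E ∪ P.image Prod.snd) m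
  obtain ⟨z, hyz, hz⟩ := hZ y
  have hEPz : ∀ c ∈ E ∪ P.image Prod.snd, L.lt m c z := fun c hc => L.lt_trans (hy c hc) hyz
  have hPz : ∀ q ∈ P, L.lt m q.2 z := fun q hq =>
    hEPz q.2 (Finset.mem_union_right _ (Finset.mem_image_of_mem _ hq))
  obtain ⟨b, hzb, hbGz, hb⟩ := hL.exists_insert_between hP (fun q hq => L.ne_of_lt (hx q hq)) hz
    (fun q hq _ => L.lt_trans (hPz q hq) hz) (fun q hq h => absurd (hx q hq) h)
  exact ⟨b, fun e he => L.lt_trans (hEPz e (Finset.mem_union_left _ he)) hzb,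
    fun q hq => L.lt_trans (hPz q hq) hzb, L.lt_trans hbGz ((hG m z b).mp hzb), hb⟩

/-- Defining `h t = b` and `h d = G b` forces `(G * h⁻¹ * G * h) t = G d`. -/
theorem exists_top_step {G : Equiv.Perm M} (hG : G ∈ L.aut)
    (hZ : ∀ x, ∃ z, L.lt m x z ∧ L.lt m z (G z)) (hP : L.IsPartialIso P) {t : M}
    (ht : ∀ q ∈ P, L.lt m q.1 t) (c : M) :
    ∃ b d, L.IsPartialIso (insert (d, G b) (insert (t, b) P)) ∧ L.lt m c d ∧ L.lt m t d ∧
      (∀ q ∈ P, L.lt m q.1 d) ∧ L.lt m d (G d) := by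
  obtain ⟨b, -, hPb, hbGb, hb⟩ := hL.exists_insert_above hG hZ hP ht ∅
  have hGb : ∀ q ∈ (insert (t, b) P).image Prod.swap, L.lt m q.1 (G b) := by
    refine Finset.forall_mem_image.mpr fun q hq => ?_
    rcases Finset.mem_insert.mp hq with rfl | hq
    exacts [hbGb, L.lt_trans (hPb q hq) hbGb]
  obtain ⟨d, hcd, hd, hdGd, hiso⟩ := hL.exists_insert_above hG hZ hb.image_swap hGb {c}
  rw [Finset.forall_mem_image] at hd
  exact ⟨b, d, hiso.of_insert_image_swap, hcd c (Finset.mem_singleton_self c),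
    hd (Finset.mem_insert_self _ _), fun q hq => hd (Finset.mem_insert_of_mem hq), hdGd⟩

end IsUniversalNLinear

theorem Equiv.Perm.mul_inv_mul_mul_apply {M : Type*} {G h : Equiv.Perm M} {a b d : M}
    (hab : h a = b) (hdb : h d = G b) : (G * h⁻¹ * G * h) a = G d := by
  simp [Equiv.Perm.mul_apply, hab, ← hdb]

namespace NLinear

variable {n : ℕ} {M : Type*} {L : NLinear n M} {m : Fin n}

theorem exists_mem_aut_of_monotone {P : ℕ → Finset (M × M)} (hmono : Monotone P)
    (hP : ∀ k, L.IsPartialIso (P k)) (hdom : ∀ x, ∃ k y, (x, y) ∈ P k)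
    (hran : ∀ y, ∃ k x, (x, y) ∈ P k) : ∃ h ∈ L.aut, ∀ k, ∀ p ∈ P k, h p.1 = p.2 := by
  have hcompat : ∀ {j k : ℕ} {p q : M × M}, p ∈ P j → q ∈ P k →
      (p.1 = q.1 ↔ p.2 = q.2) ∧ ∀ i, (L.lt i p.1 q.1 ↔ L.lt i p.2 q.2) := fun hp hq =>
    hP _ _ (hmono (le_max_left _ _) hp) _ (hmono (le_max_right _ _) hq)
  choose k f hf using hdom
  have hf_eq : ∀ {j : ℕ} {p : M × M}, p ∈ P j → f p.1 = p.2 := fun hp =>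
    (hcompat (hf _) hp).1.mp rfl
  have hbij : Function.Bijective f := ⟨fun x x' hxx' => (hcompat (hf x) (hf x')).1.mpr hxx',
    fun y => let ⟨_, x, hx⟩ := hran y; ⟨x, hf_eq hx⟩⟩
  exact ⟨Equiv.ofBijective f hbij, fun i a b => (hcompat (hf a) (hf b)).2 i, fun _ _ hp => hf_eq hp⟩

/-- The current ends of the `F`-orbit are `top` and `g bot`. -/
structure Stage (L : NLinear n M) (m : Fin n) where
  graph : Finset (M × M)
  bot : M
  top : M
  isPartialIso : L.IsPartialIso graph
  bot_lt_top : L.lt m bot top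
  mem_window : ∀ q ∈ graph, L.lt m bot q.1 ∧ L.lt m q.1 top

namespace Stage

variable [DecidableEq M] (hL : IsUniversalNLinear n M L) (S : L.Stage m) {x : M}

include hL

theorem exists_mem_dom (hbx : L.lt m S.bot x) (hxt : L.lt m x S.top) :
    ∃ S' : L.Stage m, S'.bot = S.bot ∧ S'.top = S.top ∧ S.graph ⊆ S'.graph ∧
      ∃ y, (x, y) ∈ S'.graph := by
  by_cases hx : ∃ y, (x, y) ∈ S.graph
  · exact ⟨S, rfl, rfl, subset_rfl, hx⟩
  push Not at hx
  obtain ⟨y, hy⟩ := hL.exists_insert S.isPartialIso (x := x) fun q hq hqx =>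
    hx q.2 (by rw [← hqx]; exact hq)
  refine ⟨⟨insert (x, y) S.graph, S.bot, S.top, hy, S.bot_lt_top, fun q hq => ?_⟩,
    rfl, rfl, Finset.subset_insert _ _, y, Finset.mem_insert_self _ _⟩
  rcases Finset.mem_insert.mp hq with rfl | hq
  exacts [⟨hbx, hxt⟩, S.mem_window q hq]

theorem exists_mem_range :
    ∃ S' : L.Stage m, S'.bot = S.bot ∧ S'.top = S.top ∧ S.graph ⊆ S'.graph ∧
      ∃ y, (y, x) ∈ S'.graph := by
  by_cases hx : ∃ y, (y, x) ∈ S.graph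
  · exact ⟨S, rfl, rfl, subset_rfl, hx⟩
  push Not at hx
  obtain ⟨y, hby, hyt, hy⟩ := hL.exists_insert_between S.isPartialIso.image_swap (x := x)
    (Finset.forall_mem_image.mpr fun q hq hqx => hx q.1 (by rw [← hqx]; exact hq)) S.bot_lt_top
    (Finset.forall_mem_image.mpr fun q hq _ => (S.mem_window q hq).2)
    (Finset.forall_mem_image.mpr fun q hq _ => (S.mem_window q hq).1)
  refine ⟨⟨insert (y, x) S.graph, S.bot, S.top, hy.of_insert_image_swap, S.bot_lt_top,
    fun q hq => ?_⟩, rfl, rfl, Finset.subset_insert _ _, y, Finset.mem_insert_self _ _⟩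
  rcases Finset.mem_insert.mp hq with rfl | hq
  exacts [⟨hby, hyt⟩, S.mem_window q hq]

theorem exists_cover (hbx : L.lt m S.bot x) (hxt : L.lt m x S.top) :
    ∃ S' : L.Stage m, S'.bot = S.bot ∧ S'.top = S.top ∧ S.graph ⊆ S'.graph ∧
      (∃ y, (x, y) ∈ S'.graph) ∧ ∃ y, (y, x) ∈ S'.graph := by
  obtain ⟨S₁, hbot₁, htop₁, hsub₁, y, hy⟩ := S.exists_mem_dom hL hbx hxt
  obtain ⟨S₂, hbot₂, htop₂, hsub₂, hx₂⟩ := S₁.exists_mem_range hL (x := x)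
  exact ⟨S₂, hbot₂.trans hbot₁, htop₂.trans htop₁, hsub₁.trans hsub₂, ⟨y, hsub₂ hy⟩, hx₂⟩

variable {G : Equiv.Perm M} (hG : G ∈ L.aut) (hZ : ∀ x, ∃ z, L.lt m x z ∧ L.lt m z (G z))
  (hV : ∀ x, ∃ z, L.lt m z x ∧ L.lt m (G⁻¹ z) z)

include hG hZ hV

theorem exists_extend_ends (x : M) :
    ∃ S' : L.Stage m, S.graph ⊆ S'.graph ∧ L.lt m S.top S'.top ∧ L.lt m x S'.top ∧
      L.lt m S'.bot x ∧ L.lt m (G S'.bot) x ∧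
      ∀ h : Equiv.Perm M, (∀ p ∈ S'.graph, h p.1 = p.2) →
        (G * h⁻¹ * G * h) S.top = S'.top ∧ (G * h⁻¹ * G * h) (G S'.bot) = G S.bot := by
  obtain ⟨b, d, hiso, hxd, htd, hPd, hdGd⟩ :=
    hL.exists_top_step hG hZ S.isPartialIso (fun q hq => (S.mem_window q hq).2) x
  set P := insert (d, G b) (insert (S.top, b) S.graph)
  have hbotP : ∀ q ∈ P, L.lt m S.bot q.1 := by
    simp only [P, Finset.forall_mem_insert]
    exact ⟨L.lt_trans S.bot_lt_top htd, S.bot_lt_top, fun q hq => (S.mem_window q hq).1⟩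
  have hPtop : ∀ q ∈ P, L.lt m q.1 (G d) := by
    simp only [P, Finset.forall_mem_insert]
    exact ⟨hdGd, L.lt_trans htd hdGd, fun q hq => L.lt_trans (hPd q hq) hdGd⟩
  have hG' : G⁻¹ ∈ L.dual.aut := by
    rw [aut_dual]
    exact inv_mem hG
  -- the bottom end is the top end of the reversed orders, for `G⁻¹`
  obtain ⟨u, d', hiso', hxd', hbd', hPd', hd'G⟩ :=
    hL.dual.exists_top_step hG' hV (isPartialIso_dual.mpr hiso) hbotP x
  have hd'x : L.lt m d' x := hxd'
  have hd'b : L.lt m d' S.bot := hbd'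
  have hd'P : ∀ q ∈ P, L.lt m d' q.1 := hPd'
  have hGd' : L.lt m (G⁻¹ d') d' := hd'G
  have hbGd : L.lt m S.bot (G d) := L.lt_trans S.bot_lt_top (L.lt_trans htd hdGd)
  refine ⟨⟨insert (d', G⁻¹ u) (insert (S.bot, u) P), G⁻¹ d', G d, isPartialIso_dual.mp hiso',
    L.lt_trans hGd' (L.lt_trans hd'b hbGd), ?_⟩, fun q hq => by simp [P, hq],
    L.lt_trans htd hdGd, L.lt_trans hxd hdGd, L.lt_trans hGd' hd'x, by simpa using hd'x,
    fun h hh => ?_⟩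
  · simp only [Finset.forall_mem_insert]
    exact ⟨⟨hGd', L.lt_trans hd'b hbGd⟩, ⟨L.lt_trans hGd' hd'b, hbGd⟩,
      fun q hq => ⟨L.lt_trans hGd' (hd'P q hq), hPtop q hq⟩⟩
  · have hP : ∀ p ∈ P, h p.1 = p.2 := fun p hp =>
      hh p (Finset.mem_insert_of_mem (Finset.mem_insert_of_mem hp))
    refine ⟨Equiv.Perm.mul_inv_mul_mul_apply (hP (S.top, b) (by simp [P]))
      (hP (d, G b) (by simp [P])), ?_⟩
    rw [show G (G⁻¹ d') = d' by simp]
    refine Equiv.Perm.mul_inv_mul_mul_apply (hh _ (Finset.mem_insert_self _ _)) ?_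
    rw [show G (G⁻¹ u) = u by simp]
    exact hh _ (Finset.mem_insert_of_mem (Finset.mem_insert_self _ _))

theorem exists_next (x : M) :
    ∃ S' : L.Stage m, S.graph ⊆ S'.graph ∧ (∃ y, (x, y) ∈ S'.graph) ∧
      (∃ y, (y, x) ∈ S'.graph) ∧ L.lt m S.top S'.top ∧ L.lt m x S'.top ∧
      L.lt m (G S'.bot) x ∧ ∀ h : Equiv.Perm M, (∀ p ∈ S'.graph, h p.1 = p.2) →
        (G * h⁻¹ * G * h) S.top = S'.top ∧ (G * h⁻¹ * G * h) (G S'.bot) = G S.bot := by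
  obtain ⟨S₁, hsub₁, htop₁, hxt, hbx, hGbx, hF⟩ := S.exists_extend_ends hL hG hZ hV x
  obtain ⟨S₂, hbot₂, htop₂, hsub₂, hdom, hran⟩ := S₁.exists_cover hL hbx hxt
  refine ⟨S₂, hsub₁.trans hsub₂, hdom, hran, htop₂ ▸ htop₁, htop₂ ▸ hxt, hbot₂ ▸ hGbx,
    fun h hh => ?_⟩
  rw [htop₂, hbot₂]
  exact hF h fun p hp => hh p (hsub₂ hp)

end Stage

theorem singlePlus_of_orbit {F : Equiv.Perm M} {t s : ℕ → M} (hst : s 0 = t 0)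
    (ht : ∀ k, F (t k) = t (k + 1)) (hs : ∀ k, F (s (k + 1)) = s k)
    (h01 : L.lt m (t 0) (t 1)) (hup : ∀ x, ∃ k, L.lt m x (t k))
    (hdown : ∀ x, ∃ k, L.lt m (s k) x) : L.SinglePlus m F := by
  have hpow_t : ∀ k : ℕ, (F ^ k) (t 0) = t k := by
    intro k
    induction k with
    | zero => rfl
    | succ k ih => rw [pow_succ', Equiv.Perm.mul_apply, ih, ht]
  have hpow_s : ∀ k : ℕ, (F ^ k) (s k) = s 0 := by
    intro k
    induction k with
    | zero => rfl
    | succ k ih => rw [pow_succ, Equiv.Perm.mul_apply, hs, ih]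
  refine ⟨t 0, by rwa [ht], fun x => ?_, fun x => ?_⟩
  · obtain ⟨k, hk⟩ := hup x
    exact ⟨k, by rwa [zpow_natCast, hpow_t]⟩
  · obtain ⟨k, hk⟩ := hdown x
    refine ⟨-k, ?_⟩
    rwa [zpow_neg, zpow_natCast, ← hst, Equiv.Perm.inv_eq_iff_eq.mpr (hpow_s k).symm]

end NLinear

/-- Let `g` be an automorphism of a universal `n`-linear order such
that every `x` has some `y <_m x` with `y <_m g y` and some `z >_m x` with `z <_m g z`.
Then there is an automorphism `h` such that `g ∘ h⁻¹ ∘ g ∘ h` has a single `+`-orbital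
with respect to `<_m`. -/
theorem stmt9 {n : ℕ} {M : Type*} (L : NLinear n M) (hL : IsUniversalNLinear n M L)
    (m : Fin n) (g : L.aut)
    (hg : ∀ x : M, (∃ y, L.lt m y x ∧ L.lt m y ((g : Equiv.Perm M) y)) ∧
      (∃ z, L.lt m x z ∧ L.lt m z ((g : Equiv.Perm M) z))) :
    ∃ h : L.aut, L.SinglePlus m ((g * h⁻¹ * g * h : L.aut) : Equiv.Perm M) := by
  classical
  set G : Equiv.Perm M := ↑g
  have hG : G ∈ L.aut := g.2
  have hV : ∀ x, ∃ z, L.lt m z x ∧ L.lt m (G⁻¹ z) z := fun x => by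
    obtain ⟨y, hyx, hy⟩ := (hg (G⁻¹ x)).1
    exact ⟨G y, by simpa using (hG m y _).mp hyx, by simpa using hy⟩
  have : Nonempty M := hL.infinite.nonempty
  have := hL.countable
  obtain ⟨e, he⟩ := exists_surjective_nat M
  obtain ⟨a, -, ha⟩ := hV (Classical.arbitrary M)
  choose next hsub hdom hran htop hup hdown hF using
    fun S : L.Stage m => S.exists_next hL hG (fun x => (hg x).2) hV
  let S : ℕ → L.Stage m := fun k =>
    Nat.rec ⟨∅, _, a, by simp [NLinear.IsPartialIso], ha, by simp⟩ (fun k S => next S (e k)) k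
  obtain ⟨h, hh, hext⟩ := NLinear.exists_mem_aut_of_monotone (P := fun k => (S k).graph)
    (monotone_nat_of_le_succ fun k => hsub (S k) (e k)) (fun k => (S k).isPartialIso)
    (fun x => let ⟨k, hk⟩ := he x; ⟨k + 1, hk ▸ hdom (S k) (e k)⟩)
    (fun x => let ⟨k, hk⟩ := he x; ⟨k + 1, hk ▸ hran (S k) (e k)⟩)
  refine ⟨⟨h, hh⟩, NLinear.singlePlus_of_orbit (t := fun k => (S k).top) (s := fun k => G (S k).bot)
    (by simp [S]) (fun k => (hF (S k) (e k) h (hext (k + 1))).1)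
    (fun k => (hF (S k) (e k) h (hext (k + 1))).2) (htop (S 0) (e 0)) (fun x => ?_) (fun x => ?_)⟩
  · obtain ⟨k, rfl⟩ := he x
    exact ⟨k + 1, hup (S k) (e k)⟩
  · obtain ⟨k, rfl⟩ := he x
    exact ⟨k + 1, hdown (S k) (e k)⟩
end

section
/- Let M be a universal n-linear order, let m ∈ {1, …, n}, and let g ∈ Aut(M) have, with respect to <_m, a +-orbital unbounded above and a −-orbital unbounded below; that is, there exists a with a <_m g a and {g^k a : k ∈ ℤ} unbounded above in <_m, and there exists b with g b <_m b and {g^k b : k ∈ ℤ} unbounded below in <_m. Then there exists h ∈ Aut(M) such that the commutator g⁻¹ ∘ h⁻¹ ∘ g ∘ h has a single +-orbital with respect to <_m. -/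
theorem Equiv.Perm.apply_inv_self {α : Type*} (f : Equiv.Perm α) (x : α) : f (f⁻¹ x) = x :=
  f.apply_symm_apply x

theorem Equiv.Perm.inv_apply_self {α : Type*} (f : Equiv.Perm α) (x : α) : f⁻¹ (f x) = x :=
  f.symm_apply_apply x

namespace Stmt11

variable {n : ℕ} {M : Type*}

theorem ltAsymm (L : NLinear n M) {i : Fin n} {x y : M} (h : L.lt i x y) : ¬ L.lt i y x :=
  fun h' => L.irrefl i x (L.trans i x y x h h')

theorem ltNe (L : NLinear n M) {i : Fin n} {x y : M} (h : L.lt i x y) : x ≠ y :=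
  fun e => L.irrefl i x (e ▸ h)

theorem ltNe' (L : NLinear n M) {i : Fin n} {x y : M} (h : L.lt i x y) : y ≠ x :=
  (ltNe L h).symm

theorem ltOfNeNot (L : NLinear n M) {i : Fin n} {x y : M} (hne : x ≠ y)
    (h : ¬ L.lt i x y) : L.lt i y x := by
  rcases L.total i x y with h' | h' | h'
  · exact absurd h' h
  · exact absurd h' hne
  · exact h'

theorem eqOfNotLt (L : NLinear n M) {i : Fin n} {x y : M} (h1 : ¬ L.lt i x y)
    (h2 : ¬ L.lt i y x) : x = y := by
  rcases L.total i x y with h' | h' | h'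
  · exact absurd h' h1
  · exact h'
  · exact absurd h' h2

/-- The order-reversed structure. -/
def opL (L : NLinear n M) : NLinear n M where
  lt i a b := L.lt i b a
  irrefl i a := L.irrefl i a
  trans i a b c h1 h2 := L.trans i c b a h2 h1
  total i a b := by
    rcases L.total i a b with h | h | h
    · exact Or.inr (Or.inr h)
    · exact Or.inr (Or.inl h)
    · exact Or.inl h

@[simp] theorem opL_lt (L : NLinear n M) (i : Fin n) (a b : M) :
    (opL L).lt i a b ↔ L.lt i b a := Iff.rfl

theorem opL_universal {L : NLinear n M} (hL : IsUniversalNLinear n M L) :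
    IsUniversalNLinear n M (opL L) := by
  refine ⟨hL.countable, hL.infinite, ?_⟩
  intro A D hsub hdc
  obtain ⟨x, hx, hcut⟩ := hL.extension A (fun i => {z | z ∈ A ∧ z ∉ D i})
    (fun i z hz => hz.1)
    (by
      intro i a ha b hb hab hbD
      refine ⟨ha, fun haD => hbD.2 ?_⟩
      exact hdc i b hb a ha hab haD)
  refine ⟨x, hx, ?_⟩
  intro i a ha
  constructor
  · intro hlt
    by_contra haD
    have := (hcut i a ha).2 ⟨ha, haD⟩
    exact ltAsymm L hlt this
  · intro haD
    have h1 : ¬ L.lt i a x := fun h => ((hcut i a ha).1 h).2 haD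
    refine ltOfNeNot L (fun e => hx (e ▸ ha)) h1

end Stmt11

set_option linter.unusedSectionVars false

namespace Stmt11

section FPIsec

variable {n : ℕ} {M : Type*} [DecidableEq M]

/-- Finite partial isomorphism (as a finite set of pairs). -/
def FPI (L : NLinear n M) (P : Finset (M × M)) : Prop :=
  ∀ p ∈ P, ∀ p' ∈ P, ∀ i : Fin n, L.lt i p.1 p'.1 ↔ L.lt i p.2 p'.2

theorem fpi_snd_unique {L : NLinear n M} {P : Finset (M × M)} (m : Fin n) (h : FPI L P)
    {x y y' : M} (h1 : (x, y) ∈ P) (h2 : (x, y') ∈ P) : y = y' := by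
  have a1 := h _ h1 _ h2 m
  have a2 := h _ h2 _ h1 m
  exact eqOfNotLt L (i := m) (fun hl => L.irrefl m x (a1.mpr hl))
    (fun hl => L.irrefl m x (a2.mpr hl))

theorem fpi_fst_unique {L : NLinear n M} {P : Finset (M × M)} (m : Fin n) (h : FPI L P)
    {x x' y : M} (h1 : (x, y) ∈ P) (h2 : (x', y) ∈ P) : x = x' := by
  have a1 := h _ h1 _ h2 m
  have a2 := h _ h2 _ h1 m
  exact eqOfNotLt L (i := m) (fun hl => L.irrefl m y (a1.mp hl))
    (fun hl => L.irrefl m y (a2.mp hl))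

theorem fpi_fst_unique' {L : NLinear n M} {P : Finset (M × M)} (m : Fin n) (h : FPI L P)
    {p p' : M × M} (hp : p ∈ P) (hp' : p' ∈ P) (he : p.2 = p'.2) : p.1 = p'.1 := by
  have a1 := h _ hp _ hp' m
  have a2 := h _ hp' _ hp m
  rw [he] at a1
  rw [← he] at a2
  exact eqOfNotLt L (i := m) (fun hl => L.irrefl m p'.2 (a1.mp hl))
    (fun hl => L.irrefl m p.2 (a2.mp hl))

theorem mem_swapP {P : Finset (M × M)} {u v : M} :
    (u, v) ∈ P.image Prod.swap ↔ (v, u) ∈ P := by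
  constructor
  · intro h
    obtain ⟨p, hp, he⟩ := Finset.mem_image.1 h
    obtain ⟨a, b⟩ := p
    cases he
    exact hp
  · intro h
    exact Finset.mem_image.2 ⟨(v, u), h, rfl⟩

theorem swapP_swapP (P : Finset (M × M)) :
    (P.image Prod.swap).image Prod.swap = P := by
  rw [Finset.image_image]
  have : (Prod.swap ∘ Prod.swap : M × M → M × M) = id := by
    funext p; simp
  rw [this, Finset.image_id]

theorem fpi_swap_iff {L : NLinear n M} {P : Finset (M × M)} :
    FPI L (P.image Prod.swap) ↔ FPI L P := by
  constructor
  · intro h p hp p' hp' i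
    have := h p.swap (Finset.mem_image.2 ⟨p, hp, rfl⟩) p'.swap
      (Finset.mem_image.2 ⟨p', hp', rfl⟩) i
    exact this.symm
  · intro h p hp p' hp' i
    obtain ⟨q, hq, rfl⟩ := Finset.mem_image.1 hp
    obtain ⟨q', hq', rfl⟩ := Finset.mem_image.1 hp'
    exact (h q hq q' hq' i).symm

theorem fpi_op_swap {L : NLinear n M} {P : Finset (M × M)} (h : FPI L P) :
    FPI (opL L) (P.image Prod.swap) := by
  intro p hp p' hp' i
  obtain ⟨q, hq, rfl⟩ := Finset.mem_image.1 hp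
  obtain ⟨q', hq', rfl⟩ := Finset.mem_image.1 hp'
  exact (h q' hq' q hq i).symm

theorem fpi_op_swap_back {L : NLinear n M} {P : Finset (M × M)}
    (h : FPI (opL L) (P.image Prod.swap)) : FPI L P := by
  intro p hp p' hp' i
  have := h p'.swap (Finset.mem_image.2 ⟨p', hp', rfl⟩) p.swap
    (Finset.mem_image.2 ⟨p, hp, rfl⟩) i
  exact this.symm

/-- Core one-point extension: realize the image of `x` with extra constraints
in order `m`. -/
theorem workhorse {L : NLinear n M} (hL : IsUniversalNLinear n M L) (m : Fin n)
    (P : Finset (M × M)) (hfpi : FPI L P) (x : M)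
    (hx : ∀ p ∈ P, p.1 ≠ x) (Low Upp Fresh : Finset M)
    (hLow : ∀ l ∈ Low, ∀ p ∈ P, ¬ L.lt m p.1 x → L.lt m l p.2)
    (hUpp : ∀ u ∈ Upp, (∀ p ∈ P, L.lt m p.1 x → L.lt m p.2 u) ∧ (∀ l ∈ Low, L.lt m l u)) :
    ∃ y, (∀ p ∈ P, p.2 ≠ y) ∧ y ∉ Low ∧ y ∉ Upp ∧ y ∉ Fresh ∧
      (∀ p ∈ P, ∀ i, (L.lt i p.1 x ↔ L.lt i p.2 y) ∧ (L.lt i x p.1 ↔ L.lt i y p.2)) ∧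
      (∀ l ∈ Low, L.lt m l y) ∧ (∀ u ∈ Upp, L.lt m y u) ∧
      FPI L (insert (x, y) P) := by
  classical
  set A : Finset M := P.image Prod.snd ∪ Low ∪ Upp ∪ Fresh with hA
  have hmemA : ∀ p ∈ P, p.2 ∈ A := fun p hp => by
    simp only [hA, Finset.mem_union]
    exact Or.inl (Or.inl (Or.inl (Finset.mem_image.2 ⟨p, hp, rfl⟩)))
  have hLowA : ∀ l ∈ Low, l ∈ A := fun l hl => by
    simp only [hA, Finset.mem_union]; exact Or.inl (Or.inl (Or.inr hl))
  have hUppA : ∀ u ∈ Upp, u ∈ A := fun u hu => by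
    simp only [hA, Finset.mem_union]; exact Or.inl (Or.inr hu)
  have hFreshA : ∀ u ∈ Fresh, u ∈ A := fun u hu => by
    simp only [hA, Finset.mem_union]; exact Or.inr hu
  set Base : Fin n → Set M :=
    fun i => {z | (∃ p ∈ P, p.2 = z ∧ L.lt i p.1 x) ∨ (i = m ∧ z ∈ Low)} with hBase
  set D : Fin n → Set M :=
    fun i => {z | z ∈ A ∧ ∃ b, b ∈ Base i ∧ (z = b ∨ L.lt i z b)} with hD
  obtain ⟨y, hyA, hcut⟩ := hL.extension A D (fun i z hz => hz.1)
    (by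
      intro i a ha b hb hab hbD
      obtain ⟨-, c, hc, hbc⟩ := hbD
      refine ⟨ha, c, hc, Or.inr ?_⟩
      rcases hbc with rfl | hbc
      · exact hab
      · exact L.trans i a b c hab hbc)
  have fact1 : ∀ p ∈ P, ∀ i, L.lt i p.1 x ↔ L.lt i p.2 y := by
    intro p hp i
    constructor
    · intro h
      exact (hcut i p.2 (hmemA p hp)).2 ⟨hmemA p hp, p.2, Or.inl ⟨p, hp, rfl, h⟩, Or.inl rfl⟩
    · intro h
      obtain ⟨-, c, hc, hpc⟩ := (hcut i p.2 (hmemA p hp)).1 h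
      rcases hc with ⟨p', hp', hpe, hp'x⟩ | ⟨him, hcl⟩
      · rcases hpc with he | hlt
        · have heq : p.1 = p'.1 := fpi_fst_unique' m hfpi hp hp' (by rw [hpe, he])
          exact heq ▸ hp'x
        · refine L.trans i p.1 p'.1 x ((hfpi p hp p' hp' i).2 ?_) hp'x
          rw [hpe]; exact hlt
      · subst him
        by_contra hnot
        have := hLow c hcl p hp hnot
        rcases hpc with he | hlt
        · exact L.irrefl i c (he ▸ this)
        · exact ltAsymm L this hlt
  have fact2 : ∀ l ∈ Low, L.lt m l y := by
    intro l hl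
    exact (hcut m l (hLowA l hl)).2 ⟨hLowA l hl, l, Or.inr ⟨rfl, hl⟩, Or.inl rfl⟩
  have fact3 : ∀ u ∈ Upp, L.lt m y u := by
    intro u hu
    have hnD : u ∉ D m := by
      rintro ⟨-, c, hc, huc⟩
      have hcu : L.lt m c u := by
        rcases hc with ⟨p', hp', rfl, hp'x⟩ | ⟨-, hcl⟩
        · exact (hUpp u hu).1 p' hp' hp'x
        · exact (hUpp u hu).2 c hcl
      rcases huc with rfl | hlt
      · exact L.irrefl m u hcu
      · exact ltAsymm L hcu hlt
    have h1 : ¬ L.lt m u y := fun h => hnD ((hcut m u (hUppA u hu)).1 h)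
    exact ltOfNeNot L (fun e => hyA (e ▸ hUppA u hu)) h1
  have hyne : ∀ p ∈ P, p.2 ≠ y := fun p hp e => hyA (e ▸ hmemA p hp)
  have fact5 : ∀ p ∈ P, ∀ i, L.lt i x p.1 ↔ L.lt i y p.2 := by
    intro p hp i
    constructor
    · intro h
      have h1 : ¬ L.lt i p.2 y := fun h' => ltAsymm L h ((fact1 p hp i).2 h')
      exact ltOfNeNot L (hyne p hp) h1
    · intro h
      have h1 : ¬ L.lt i p.1 x := fun h' => ltAsymm L h ((fact1 p hp i).1 h')
      exact ltOfNeNot L (hx p hp) h1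
  refine ⟨y, hyne, fun e => hyA (hLowA y e), fun e => hyA (hUppA y e),
    fun e => hyA (hFreshA y e), fun p hp i => ⟨fact1 p hp i, fact5 p hp i⟩,
    fact2, fact3, ?_⟩
  intro p hp p' hp' i
  rcases Finset.mem_insert.1 hp with h | hp <;>
    rcases Finset.mem_insert.1 hp' with h' | hp'
  · subst h; subst h'; exact iff_of_false (L.irrefl i x) (L.irrefl i y)
  · subst h; exact fact5 p' hp' i
  · subst h'; exact fact1 p hp i
  · exact hfpi p hp p' hp' i

end FPIsec

end Stmt11

namespace Stmt11

section LinkSec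

variable {n : ℕ} {M : Type*} [DecidableEq M]

theorem workhorsePre {L : NLinear n M} (hL : IsUniversalNLinear n M L) (m : Fin n)
    (P : Finset (M × M)) (hfpi : FPI L P) (z : M)
    (hz : ∀ p ∈ P, p.2 ≠ z) (Low Upp Fresh : Finset M)
    (hLow : ∀ l ∈ Low, ∀ p ∈ P, ¬ L.lt m p.2 z → L.lt m l p.1)
    (hUpp : ∀ u ∈ Upp, (∀ p ∈ P, L.lt m p.2 z → L.lt m p.1 u) ∧ (∀ l ∈ Low, L.lt m l u)) :
    ∃ t, (∀ p ∈ P, p.1 ≠ t) ∧ t ∉ Low ∧ t ∉ Upp ∧ t ∉ Fresh ∧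
      (∀ p ∈ P, ∀ i, (L.lt i p.2 z ↔ L.lt i p.1 t) ∧ (L.lt i z p.2 ↔ L.lt i t p.1)) ∧
      (∀ l ∈ Low, L.lt m l t) ∧ (∀ u ∈ Upp, L.lt m t u) ∧ FPI L (insert (t, z) P) := by
  obtain ⟨t, h1, h2, h3, h4, h5, h6, h7, h8⟩ := workhorse hL m (P.image Prod.swap)
    (fpi_swap_iff.2 hfpi) z
    (by
      intro p hp
      obtain ⟨q, hq, rfl⟩ := Finset.mem_image.1 hp
      exact hz q hq)
    Low Upp Fresh
    (by
      intro l hl p hp hno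
      obtain ⟨q, hq, rfl⟩ := Finset.mem_image.1 hp
      exact hLow l hl q hq hno)
    (by
      intro u hu
      refine ⟨?_, (hUpp u hu).2⟩
      intro p hp hlt
      obtain ⟨q, hq, rfl⟩ := Finset.mem_image.1 hp
      exact (hUpp u hu).1 q hq hlt)
  refine ⟨t, ?_, h2, h3, h4, ?_, h6, h7, ?_⟩
  · intro p hp
    exact h1 p.swap (Finset.mem_image.2 ⟨p, hp, rfl⟩)
  · intro p hp i
    exact h5 p.swap (Finset.mem_image.2 ⟨p, hp, rfl⟩) i
  · have he : insert (z, t) (P.image Prod.swap) = (insert (t, z) P).image Prod.swap := by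
      rw [Finset.image_insert]
      rfl
    rw [he] at h8
    exact fpi_swap_iff.1 h8

theorem auto_inv {L : NLinear n M} {gp : Equiv.Perm M}
    (hg : ∀ i x y, L.lt i x y ↔ L.lt i (gp x) (gp y)) (i : Fin n) (x y : M) :
    L.lt i x y ↔ L.lt i (gp⁻¹ x) (gp⁻¹ y) := by
  have h := hg i (gp⁻¹ x) (gp⁻¹ y)
  rw [Equiv.Perm.apply_inv_self, Equiv.Perm.apply_inv_self] at h
  exact h.symm

theorem auto_zpow {L : NLinear n M} {gp : Equiv.Perm M}
    (hg : ∀ i x y, L.lt i x y ↔ L.lt i (gp x) (gp y)) (k : ℤ) (i : Fin n) (x y : M) :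
    L.lt i x y ↔ L.lt i ((gp ^ k) x) ((gp ^ k) y) := by
  induction k using Int.induction_on generalizing x y with
  | zero => simp
  | succ k ih =>
      have he : ∀ w : M, (gp ^ ((k : ℤ) + 1)) w = (gp ^ (k : ℤ)) (gp w) := by
        intro w
        rw [zpow_add_one]
        rfl
      rw [he, he]
      exact (hg i x y).trans (ih (gp x) (gp y))
  | pred k ih =>
      have he : ∀ w : M, (gp ^ (-(k : ℤ) - 1)) w = (gp ^ (-(k : ℤ))) (gp⁻¹ w) := by
        intro w
        rw [zpow_sub_one]
        rfl
      rw [he, he]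
      exact (auto_inv hg i x y).trans (ih (gp⁻¹ x) (gp⁻¹ y))

theorem orb_succ (gp : Equiv.Perm M) (a : M) (k : ℤ) :
    (gp ^ (k + 1)) a = gp ((gp ^ k) a) := by
  rw [add_comm, zpow_add, zpow_one]
  rfl

theorem orb_pred (gp : Equiv.Perm M) (a : M) (k : ℤ) :
    gp⁻¹ ((gp ^ (k + 1)) a) = (gp ^ k) a := by
  rw [orb_succ, Equiv.Perm.inv_apply_self]

theorem orb_mono {L : NLinear n M} {m : Fin n} {gp : Equiv.Perm M}
    (hg : ∀ i x y, L.lt i x y ↔ L.lt i (gp x) (gp y)) {a : M}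
    (ha1 : L.lt m a (gp a)) (k : ℤ) :
    L.lt m ((gp ^ k) a) ((gp ^ (k + 1)) a) := by
  have : (gp ^ (k + 1)) a = (gp ^ k) (gp a) := by
    rw [zpow_add_one]
    rfl
  rw [this]
  exact (auto_zpow hg k m a (gp a)).1 ha1

theorem orb_lt {L : NLinear n M} {m : Fin n} {gp : Equiv.Perm M}
    (hg : ∀ i x y, L.lt i x y ↔ L.lt i (gp x) (gp y)) {a : M}
    (ha1 : L.lt m a (gp a)) {j k : ℤ} (hjk : j < k) :
    L.lt m ((gp ^ j) a) ((gp ^ k) a) := by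
  have key : ∀ d : ℕ, L.lt m ((gp ^ j) a) ((gp ^ (j + 1 + (d : ℤ))) a) := by
    intro d
    induction d with
    | zero => simpa using orb_mono hg ha1 j
    | succ d ih =>
        have h2 := orb_mono hg ha1 (j + 1 + (d : ℤ))
        have he : j + 1 + ((d : ℤ) + 1) = j + 1 + (d : ℤ) + 1 := by ring
        rw [Nat.cast_add, Nat.cast_one, he]
        exact L.trans m _ _ _ ih h2
  have he : k = j + 1 + ((k - j - 1).toNat : ℤ) := by omega
  rw [he]
  exact key _

theorem orb_above {L : NLinear n M} {m : Fin n} {gp : Equiv.Perm M}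
    (hg : ∀ i x y, L.lt i x y ↔ L.lt i (gp x) (gp y)) {a : M}
    (ha1 : L.lt m a (gp a)) (ha2 : ∀ x, ∃ k : ℤ, L.lt m x ((gp ^ k) a))
    (S : Finset M) : ∃ K : ℤ, ∀ s ∈ S, L.lt m s ((gp ^ K) a) := by
  classical
  induction S using Finset.induction_on with
  | empty => exact ⟨0, by simp⟩
  | insert s S hne ih =>
      obtain ⟨K1, hK1⟩ := ih
      obtain ⟨K2, hK2⟩ := ha2 s
      refine ⟨max K1 K2 + 1, ?_⟩
      intro x hx
      rcases Finset.mem_insert.1 hx with rfl | hx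
      · exact L.trans m _ _ _ hK2 (orb_lt hg ha1 (by omega))
      · exact L.trans m _ _ _ (hK1 x hx) (orb_lt hg ha1 (by omega))

end LinkSec

end Stmt11

namespace Stmt11

variable {n : ℕ} {M : Type*}

/-- Invariant data for one (ascending) side of the construction. -/
structure AscData (L : NLinear n M) (m : Fin n) (gp : Equiv.Perm M)
    (P : Finset (M × M)) (c q Z : M) : Prop where
  pairZ : (gp c, Z) ∈ P
  dom_lt : ∀ p ∈ P, p.1 ≠ gp c → L.lt m p.1 c
  ran_lt : ∀ p ∈ P, p.1 ≠ gp c → L.lt m p.2 q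
  c_lt : L.lt m c (gp c)
  qZ : L.lt m q Z
  Zgq : L.lt m Z (gp q)

theorem AscData.not_dom {L : NLinear n M} {m : Fin n} {gp : Equiv.Perm M}
    {P : Finset (M × M)} {c q Z : M} (h : AscData L m gp P c q Z) :
    ∀ p ∈ P, p.1 ≠ c := by
  intro p hp he
  by_cases hc : p.1 = gp c
  · exact ltNe L h.c_lt (he.symm.trans hc)
  · exact L.irrefl m c (he ▸ h.dom_lt p hp hc)

theorem AscData.sndZ {L : NLinear n M} {m : Fin n} {gp : Equiv.Perm M}
    {P : Finset (M × M)} {c q Z : M} [DecidableEq M] (hfpi : FPI L P)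
    (h : AscData L m gp P c q Z) :
    ∀ p ∈ P, p.1 = gp c → p.2 = Z := by
  intro p hp he
  have hmem : (gp c, p.2) ∈ P := by
    rw [← he]
    exact hp
  exact fpi_snd_unique m hfpi hmem h.pairZ

section LinkSec

variable [DecidableEq M]

/-- The main link-step: extend the partial isomorphism by one step of the
commutator chain, pushing the new chain point above the targets `W`. -/
theorem link {L : NLinear n M} (hL : IsUniversalNLinear n M L) (m : Fin n)
    {gp : Equiv.Perm M} (hg : ∀ i x y, L.lt i x y ↔ L.lt i (gp x) (gp y))
    {a : M} (ha1 : L.lt m a (gp a)) (ha2 : ∀ x, ∃ k : ℤ, L.lt m x ((gp ^ k) a))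
    {P : Finset (M × M)} {c q Z : M} (hfpi : FPI L P)
    (hasc : AscData L m gp P c q Z) (W : Finset M) :
    ∃ v t,
      (∀ p ∈ P, p.2 ≠ v) ∧
      L.lt m q v ∧
      L.lt m v (gp v) ∧
      (∀ p ∈ P, L.lt m p.2 (gp v)) ∧
      (∀ w ∈ W, L.lt m w (gp⁻¹ t)) ∧
      L.lt m c (gp⁻¹ t) ∧
      FPI L (insert (t, gp v) (insert (c, v) P)) ∧
      AscData L m gp (insert (t, gp v) (insert (c, v) P)) (gp⁻¹ t) (gp q) (gp v) := by
  classical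
  -- Step 1: choose the image `v` of `c`.
  obtain ⟨v, hv1, hv2, -, -, hv5, hv6, -, hfpi1⟩ := workhorse hL m P hfpi c
    (hasc.not_dom) {q} ∅ ∅
    (by
      intro l hl p hp hno
      rw [Finset.mem_singleton] at hl
      subst hl
      by_cases hc : p.1 = gp c
      · rw [hasc.sndZ hfpi p hp hc]
        exact hasc.qZ
      · exact absurd (hasc.dom_lt p hp hc) hno)
    (by
      intro u hu
      exact absurd hu (Finset.notMem_empty u))
  have qv : L.lt m q v := hv6 q (Finset.mem_singleton_self q)
  have vZ : L.lt m v Z := ((hv5 (gp c, Z) hasc.pairZ m).2).1 hasc.c_lt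
  have qgq : L.lt m q (gp q) := L.trans m _ _ _ hasc.qZ hasc.Zgq
  have vgq : L.lt m v (gp q) := L.trans m _ _ _ vZ hasc.Zgq
  have vgv : L.lt m v (gp v) := L.trans m _ _ _ vgq ((hg m q v).1 qv)
  have E4 : ∀ p ∈ P, L.lt m p.2 (gp v) := by
    intro p hp
    by_cases hc : p.1 = gp c
    · rw [hasc.sndZ hfpi p hp hc]
      exact L.trans m _ _ _ hasc.Zgq ((hg m q v).1 qv)
    · exact L.trans m _ _ _ (hasc.ran_lt p hp hc) (L.trans m _ _ _ qv vgv)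
  set P1 : Finset (M × M) := insert (c, v) P with hP1
  have E4' : ∀ p ∈ P1, L.lt m p.2 (gp v) := by
    intro p hp
    rcases Finset.mem_insert.1 hp with he | hp
    · rw [he]
      exact vgv
    · exact E4 p hp
  -- Step 2: choose the preimage `t` of `gp v`.
  obtain ⟨K, hK⟩ := orb_above hg ha1 ha2
    ((P1.image Prod.fst) ∪ ((P1.image Prod.fst) ∪ W).image gp)
  set aK : M := (gp ^ K) a with haK
  set aK1 : M := (gp ^ (K + 1)) a with haK1
  have haKlt : L.lt m aK aK1 := orb_mono hg ha1 K
  obtain ⟨t, ht1, -, -, -, ht5, ht6, ht7, hfpi2⟩ := workhorsePre hL m P1 hfpi1 (gp v)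
    (fun p hp => ltNe L (E4' p hp))
    (insert aK (((P1.image Prod.fst) ∪ W).image gp)) {aK1} ∅
    (by
      intro l hl p hp hno
      exact absurd (E4' p hp) hno)
    (by
      intro u hu
      rw [Finset.mem_singleton] at hu
      subst hu
      constructor
      · intro p hp hlt
        refine L.trans m _ _ _ (hK p.1 ?_) haKlt
        exact Finset.mem_union_left _ (Finset.mem_image.2 ⟨p, hp, rfl⟩)
      · intro l hl
        rcases Finset.mem_insert.1 hl with he | hl
        · rw [he]; exact haKlt
        · refine L.trans m _ _ _ (hK l (Finset.mem_union_right _ hl)) haKlt)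
  have htaK : L.lt m aK t := ht6 aK (Finset.mem_insert_self _ _)
  have htaK1 : L.lt m t aK1 := ht7 aK1 (Finset.mem_singleton_self _)
  have htgt : ∀ x ∈ (P1.image Prod.fst) ∪ W, L.lt m x (gp⁻¹ t) := by
    intro x hx
    have h1 : L.lt m (gp x) t := ht6 (gp x)
      (Finset.mem_insert_of_mem (Finset.mem_image.2 ⟨x, hx, rfl⟩))
    have h2 := (auto_inv hg m (gp x) t).1 h1
    rwa [Equiv.Perm.inv_apply_self] at h2
  have hcdom : c ∈ (P1.image Prod.fst) ∪ W :=
    Finset.mem_union_left _ (Finset.mem_image.2 ⟨(c, v), Finset.mem_insert_self _ _, rfl⟩)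
  have hgct : gp (gp⁻¹ t) = t := Equiv.Perm.apply_inv_self gp t
  have hc'lt : L.lt m (gp⁻¹ t) t := by
    have h1 : L.lt m (gp⁻¹ t) aK := by
      have h2 := (auto_inv hg m t aK1).1 htaK1
      rwa [haK1, orb_pred] at h2
    exact L.trans m _ _ _ h1 htaK
  refine ⟨v, t, hv1, qv, vgv, E4, fun w hw => htgt w (Finset.mem_union_right _ hw),
    htgt c hcdom, hfpi2, ?_⟩
  constructor
  · rw [hgct]
    exact Finset.mem_insert_self _ _
  · -- dom_lt
    intro p hp hne
    rw [hgct] at hne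
    rcases Finset.mem_insert.1 hp with he | hp
    · exact absurd (by rw [he]) hne
    · refine htgt p.1 (Finset.mem_union_left _ (Finset.mem_image.2 ⟨p, hp, rfl⟩))
  · -- ran_lt
    intro p hp hne
    rw [hgct] at hne
    rcases Finset.mem_insert.1 hp with he | hp
    · exact absurd (by rw [he]) hne
    · rcases Finset.mem_insert.1 hp with he | hp
      · rw [he]
        exact vgq
      · by_cases hc : p.1 = gp c
        · rw [hasc.sndZ hfpi p hp hc]
          exact hasc.Zgq
        · exact L.trans m _ _ _ (hasc.ran_lt p hp hc) qgq
  · rw [hgct]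
    exact hc'lt
  · exact (hg m q v).1 qv
  · exact (hg m v (gp q)).1 vgq
end LinkSec

end Stmt11

namespace Stmt11

section HKSec

variable {n : ℕ} {M : Type*} [DecidableEq M]

/-- Housekeeping step: put a point `e` into the domain of the partial isomorphism. -/
theorem hkdom {L : NLinear n M} (hL : IsUniversalNLinear n M L) (m : Fin n)
    {gp : Equiv.Perm M}
    {P : Finset (M × M)} {c q Z ct qt Zt : M} (hfpi : FPI L P)
    (hasc : AscData L m gp P c q Z)
    (hZt : (Zt, gp ct) ∈ P)
    (hct : ∀ p ∈ P, p.2 ≠ gp ct → L.lt m ct p.2)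
    (hZtqt : L.lt m Zt qt)
    (e : M) (he1 : L.lt m qt e) (he2 : L.lt m e c) (hctq : L.lt m ct q)
    (hed : ∀ p ∈ P, p.1 ≠ e) :
    ∃ y, (∀ p ∈ P, p.2 ≠ y) ∧ L.lt m ct y ∧ L.lt m y q ∧
      FPI L (insert (e, y) P) ∧ AscData L m gp (insert (e, y) P) c q Z := by
  obtain ⟨y, hy1, -, -, -, -, hy6, hy7, hfpi'⟩ := workhorse hL m P hfpi e hed {ct} {q} ∅
    (by
      intro l hl p hp hno
      rw [Finset.mem_singleton] at hl
      rw [hl]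
      by_cases hc : p.2 = gp ct
      · exfalso
        have hfst : p.1 = Zt := by
          have hmem : (p.1, gp ct) ∈ P := by rw [← hc]; exact hp
          exact fpi_fst_unique m hfpi hmem hZt
        refine hno (L.trans m _ _ _ ?_ he1)
        rw [hfst]
        exact hZtqt
      · exact hct p hp hc)
    (by
      intro u hu
      rw [Finset.mem_singleton] at hu
      rw [hu]
      constructor
      · intro p hp hlt
        have hne : p.1 ≠ gp c := by
          intro he
          have h1 : L.lt m p.1 c := L.trans m _ _ _ hlt he2
          rw [he] at h1
          exact ltAsymm L h1 hasc.c_lt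
        exact hasc.ran_lt p hp hne
      · intro l hl
        rw [Finset.mem_singleton] at hl
        rw [hl]
        exact hctq)
  have hcty : L.lt m ct y := hy6 ct (Finset.mem_singleton_self _)
  have hyq : L.lt m y q := hy7 q (Finset.mem_singleton_self _)
  refine ⟨y, hy1, hcty, hyq, hfpi', ?_⟩
  constructor
  · exact Finset.mem_insert_of_mem hasc.pairZ
  · intro p hp hne
    rcases Finset.mem_insert.1 hp with he | hp
    · rw [he]
      exact he2
    · exact hasc.dom_lt p hp hne
  · intro p hp hne
    rcases Finset.mem_insert.1 hp with he | hp
    · rw [he]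
      exact hyq
    · exact hasc.ran_lt p hp hne
  · exact hasc.c_lt
  · exact hasc.qZ
  · exact hasc.Zgq

end HKSec

/-- The full state of the construction. -/
structure UStep (M : Type*) where
  P : Finset (M × M)
  c : M
  q : M
  Z : M
  ct : M
  qt : M
  Zt : M
  qi : ℤ
  qti : ℤ

section ValidSec

variable {n : ℕ} {M : Type*} [DecidableEq M]

structure Valid (L : NLinear n M) (m : Fin n) (gp : Equiv.Perm M) (a b : M)
    (S : UStep M) : Prop where
  fpi : FPI L S.P
  asc : AscData L m gp S.P S.c S.q S.Z
  desc : AscData (opL L) m gp (S.P.image Prod.swap) S.ct S.qt S.Zt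
  sep1 : L.lt m S.ct S.c
  sep2 : L.lt m S.ct S.q
  sep3 : L.lt m S.qt S.c
  sep4 : L.lt m S.qt S.q
  qval : S.q = (gp ^ S.qi) a
  qtval : S.qt = (gp ^ S.qti) b

theorem Valid.Zt_pair {L : NLinear n M} {m : Fin n} {gp : Equiv.Perm M} {a b : M}
    {S : UStep M} (h : Valid L m gp a b S) : (S.Zt, gp S.ct) ∈ S.P :=
  mem_swapP.1 h.desc.pairZ

theorem Valid.ct_lt_ran {L : NLinear n M} {m : Fin n} {gp : Equiv.Perm M} {a b : M}
    {S : UStep M} (h : Valid L m gp a b S) :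
    ∀ p ∈ S.P, p.2 ≠ gp S.ct → L.lt m S.ct p.2 := by
  intro p hp hne
  exact h.desc.dom_lt p.swap (Finset.mem_image.2 ⟨p, hp, rfl⟩) hne

theorem Valid.qt_lt_dom {L : NLinear n M} {m : Fin n} {gp : Equiv.Perm M} {a b : M}
    {S : UStep M} (h : Valid L m gp a b S) :
    ∀ p ∈ S.P, p.2 ≠ gp S.ct → L.lt m S.qt p.1 := by
  intro p hp hne
  exact h.desc.ran_lt p.swap (Finset.mem_image.2 ⟨p, hp, rfl⟩) hne

theorem Valid.Ztqt {L : NLinear n M} {m : Fin n} {gp : Equiv.Perm M} {a b : M}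
    {S : UStep M} (h : Valid L m gp a b S) : L.lt m S.Zt S.qt := h.desc.qZ

theorem Valid.gqtZt {L : NLinear n M} {m : Fin n} {gp : Equiv.Perm M} {a b : M}
    {S : UStep M} (h : Valid L m gp a b S) : L.lt m (gp S.qt) S.Zt := h.desc.Zgq

theorem Valid.gct_ct {L : NLinear n M} {m : Fin n} {gp : Equiv.Perm M} {a b : M}
    {S : UStep M} (h : Valid L m gp a b S) : L.lt m (gp S.ct) S.ct := h.desc.c_lt

/-- What one full stage of the construction accomplishes. -/
def Good (L : NLinear n M) (m : Fin n) (gp : Equiv.Perm M) (e : ℕ ≃ M) (s : ℕ)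
    (S S' : UStep M) : Prop :=
  S.P ⊆ S'.P ∧
  (∃ v, (S.c, v) ∈ S'.P ∧ (gp S'.c, gp v) ∈ S'.P) ∧
  (∃ w, (w, S.ct) ∈ S'.P ∧ (gp w, gp S'.ct) ∈ S'.P ∧ L.lt m w S.qt) ∧
  L.lt m S.c S'.c ∧
  (∀ j ≤ s + 1, L.lt m (e j) S'.c) ∧
  (∀ j ≤ s + 1, L.lt m S'.ct (e j)) ∧
  S'.qi = S.qi + 1 ∧ S'.qti = S.qti + 1 ∧
  (L.lt m S'.qt (e (Nat.unpair s).1) → L.lt m (e (Nat.unpair s).1) S'.c →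
    ∃ y, (e (Nat.unpair s).1, y) ∈ S'.P) ∧
  (L.lt m S'.ct (e (Nat.unpair s).1) → L.lt m (e (Nat.unpair s).1) S'.q →
    ∃ x, (x, e (Nat.unpair s).1) ∈ S'.P)

end ValidSec

end Stmt11

namespace Stmt11

section HKStepSec

variable {n : ℕ} {M : Type*} [DecidableEq M]
variable {L : NLinear n M} {gp : Equiv.Perm M} {a b : M}

theorem hkStepDom (hL : IsUniversalNLinear n M L) (m : Fin n)
    (S : UStep M) (hv : Valid L m gp a b S) (x : M) :
    ∃ S' : UStep M, Valid L m gp a b S' ∧ S.P ⊆ S'.P ∧ S'.c = S.c ∧ S'.q = S.q ∧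
      S'.Z = S.Z ∧ S'.ct = S.ct ∧ S'.qt = S.qt ∧ S'.Zt = S.Zt ∧
      S'.qi = S.qi ∧ S'.qti = S.qti ∧
      (L.lt m S.qt x → L.lt m x S.c → ∃ y, (x, y) ∈ S'.P) := by
  classical
  by_cases hin : ∃ y, (x, y) ∈ S.P
  · exact ⟨S, hv, Finset.Subset.refl _, rfl, rfl, rfl, rfl, rfl, rfl, rfl, rfl,
      fun _ _ => hin⟩
  by_cases hc1 : L.lt m S.qt x
  case neg => exact ⟨S, hv, Finset.Subset.refl _, rfl, rfl, rfl, rfl, rfl, rfl, rfl, rfl,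
      fun h _ => absurd h hc1⟩
  by_cases hc2 : L.lt m x S.c
  case neg => exact ⟨S, hv, Finset.Subset.refl _, rfl, rfl, rfl, rfl, rfl, rfl, rfl, rfl,
      fun _ h => absurd h hc2⟩
  have hed : ∀ p ∈ S.P, p.1 ≠ x := by
    intro p hp he
    exact hin ⟨p.2, by rw [← he]; exact hp⟩
  obtain ⟨y, k1, k2, k3, k4, k5⟩ := hkdom hL m hv.fpi hv.asc hv.Zt_pair hv.ct_lt_ran
    hv.Ztqt x hc1 hc2 hv.sep2 hed
  refine ⟨{S with P := insert (x, y) S.P}, ?_, Finset.subset_insert _ _,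
    rfl, rfl, rfl, rfl, rfl, rfl, rfl, rfl,
    fun _ _ => ⟨y, Finset.mem_insert_self _ _⟩⟩
  have hsw : (insert (x, y) S.P).image Prod.swap
      = insert (y, x) (S.P.image Prod.swap) := by
    rw [Finset.image_insert]
    rfl
  refine ⟨k4, k5, ?_, hv.sep1, hv.sep2, hv.sep3, hv.sep4, hv.qval, hv.qtval⟩
  rw [hsw]
  constructor
  · exact Finset.mem_insert_of_mem hv.desc.pairZ
  · intro p hp hne
    rcases Finset.mem_insert.1 hp with he | hp
    · rw [he]
      exact k2
    · exact hv.desc.dom_lt p hp hne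
  · intro p hp hne
    rcases Finset.mem_insert.1 hp with he | hp
    · rw [he]
      exact hc1
    · exact hv.desc.ran_lt p hp hne
  · exact hv.desc.c_lt
  · exact hv.desc.qZ
  · exact hv.desc.Zgq

theorem hkStepRan (hL : IsUniversalNLinear n M L) (m : Fin n)
    (S : UStep M) (hv : Valid L m gp a b S) (x : M) :
    ∃ S' : UStep M, Valid L m gp a b S' ∧ S.P ⊆ S'.P ∧ S'.c = S.c ∧ S'.q = S.q ∧
      S'.Z = S.Z ∧ S'.ct = S.ct ∧ S'.qt = S.qt ∧ S'.Zt = S.Zt ∧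
      S'.qi = S.qi ∧ S'.qti = S.qti ∧
      (L.lt m S.ct x → L.lt m x S.q → ∃ w, (w, x) ∈ S'.P) := by
  classical
  by_cases hin : ∃ w, (w, x) ∈ S.P
  · exact ⟨S, hv, Finset.Subset.refl _, rfl, rfl, rfl, rfl, rfl, rfl, rfl, rfl,
      fun _ _ => hin⟩
  by_cases hc1 : L.lt m S.ct x
  case neg => exact ⟨S, hv, Finset.Subset.refl _, rfl, rfl, rfl, rfl, rfl, rfl, rfl, rfl,
      fun h _ => absurd h hc1⟩
  by_cases hc2 : L.lt m x S.q
  case neg => exact ⟨S, hv, Finset.Subset.refl _, rfl, rfl, rfl, rfl, rfl, rfl, rfl, rfl,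
      fun _ h => absurd h hc2⟩
  have hed : ∀ p ∈ S.P.image Prod.swap, p.1 ≠ x := by
    intro p hp he
    obtain ⟨p', hp', rfl⟩ := Finset.mem_image.1 hp
    refine hin ⟨p'.1, ?_⟩
    have hmm : (p'.1, p'.2) ∈ S.P := hp'
    rwa [show p'.2 = x from he] at hmm
  obtain ⟨y2, k1, k2, k3, k4, k5⟩ := hkdom (opL_universal hL) m (gp := gp)
    (P := S.P.image Prod.swap) (c := S.ct) (q := S.qt) (Z := S.Zt)
    (ct := S.c) (qt := S.q) (Zt := S.Z)
    (fpi_op_swap hv.fpi) hv.desc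
    (Finset.mem_image.2 ⟨(gp S.c, S.Z), hv.asc.pairZ, rfl⟩)
    (by
      intro p hp hne
      obtain ⟨p', hp', rfl⟩ := Finset.mem_image.1 hp
      exact hv.asc.dom_lt p' hp' hne)
    hv.asc.qZ x hc2 hc1 hv.sep3 hed
  have hsw : (insert (y2, x) S.P).image Prod.swap
      = insert (x, y2) (S.P.image Prod.swap) := by
    rw [Finset.image_insert]
    rfl
  refine ⟨{S with P := insert (y2, x) S.P}, ?_, Finset.subset_insert _ _,
    rfl, rfl, rfl, rfl, rfl, rfl, rfl, rfl,
    fun _ _ => ⟨y2, Finset.mem_insert_self _ _⟩⟩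
  refine ⟨?_, ?_, ?_, hv.sep1, hv.sep2, hv.sep3, hv.sep4, hv.qval, hv.qtval⟩
  · exact fpi_op_swap_back (by rw [hsw]; exact k4)
  · constructor
    · exact Finset.mem_insert_of_mem hv.asc.pairZ
    · intro p hp hne
      rcases Finset.mem_insert.1 hp with he | hp
      · rw [he]
        exact k2
      · exact hv.asc.dom_lt p hp hne
    · intro p hp hne
      rcases Finset.mem_insert.1 hp with he | hp
      · rw [he]
        exact hc2
      · exact hv.asc.ran_lt p hp hne
    · exact hv.asc.c_lt
    · exact hv.asc.qZ
    · exact hv.asc.Zgq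
  · rw [hsw]
    exact k5

end HKStepSec

end Stmt11

namespace Stmt11

section FullStepSec

variable {n : ℕ} {M : Type*} [DecidableEq M]
variable {L : NLinear n M} {gp : Equiv.Perm M} {a b : M}

theorem fullStep (hL : IsUniversalNLinear n M L) (m : Fin n)
    (hg : ∀ i x y, L.lt i x y ↔ L.lt i (gp x) (gp y))
    (ha1 : L.lt m a (gp a)) (ha2 : ∀ x, ∃ k : ℤ, L.lt m x ((gp ^ k) a))
    (hb1 : L.lt m (gp b) b) (hb2 : ∀ x, ∃ k : ℤ, L.lt m ((gp ^ k) b) x)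
    (e : ℕ ≃ M) (s : ℕ) (S : UStep M) (hS : Valid L m gp a b S) :
    ∃ S', Valid L m gp a b S' ∧ Good L m gp e s S S' := by
  classical
  have hgop : ∀ i x y, (opL L).lt i x y ↔ (opL L).lt i (gp x) (gp y) :=
    fun i x y => hg i y x
  have hLop := opL_universal hL
  have hqgq : L.lt m S.q (gp S.q) := L.trans m _ _ _ hS.asc.qZ hS.asc.Zgq
  set x0 : M := e (Nat.unpair s).1 with hx0
  -- === ascending link ===
  set W1 : Finset M := ((Finset.range (s + 2)).image e) ∪ {S.c, gp⁻¹ S.qt} with hW1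
  obtain ⟨v, t, l1, l2, l3, l4, l5, l6, l7, l8⟩ := link hL m hg ha1 ha2 hS.fpi hS.asc W1
  have hct : gp (gp⁻¹ t) = t := Equiv.Perm.apply_inv_self gp t
  have hScW1 : S.c ∈ W1 := by simp [hW1]
  have hqtW1 : gp⁻¹ S.qt ∈ W1 := by simp [hW1]
  have heW1 : ∀ j ≤ s + 1, e j ∈ W1 := by
    intro j hj
    simp only [hW1, Finset.mem_union, Finset.mem_image, Finset.mem_range]
    exact Or.inl ⟨j, by omega, rfl⟩
  have hqt_t : L.lt m S.qt t := by
    have h1 := (hg m (gp⁻¹ S.qt) (gp⁻¹ t)).1 (l5 _ hqtW1)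
    rwa [hct, Equiv.Perm.apply_inv_self] at h1
  set P1 : Finset (M × M) := insert (t, gp v) (insert (S.c, v) S.P) with hP1
  have hv1 : Valid L m gp a b ⟨P1, gp⁻¹ t, gp S.q, gp v, S.ct, S.qt, S.Zt,
      S.qi + 1, S.qti⟩ := by
    refine ⟨l7, l8, ?_, ?_, ?_, ?_, ?_, ?_, ?_⟩
    · show AscData (opL L) m gp (P1.image Prod.swap) S.ct S.qt S.Zt
      have hsw : P1.image Prod.swap
          = insert (gp v, t) (insert (v, S.c) (S.P.image Prod.swap)) := by
        rw [hP1, Finset.image_insert, Finset.image_insert]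
        rfl
      rw [hsw]
      constructor
      · exact Finset.mem_insert_of_mem (Finset.mem_insert_of_mem hS.desc.pairZ)
      · intro p hp hne
        rcases Finset.mem_insert.1 hp with he | hp
        · rw [he]
          show L.lt m S.ct (gp v)
          exact L.trans m _ _ _ hS.sep2 (L.trans m _ _ _ l2 l3)
        rcases Finset.mem_insert.1 hp with he | hp
        · rw [he]
          show L.lt m S.ct v
          exact L.trans m _ _ _ hS.sep2 l2
        · exact hS.desc.dom_lt p hp hne
      · intro p hp hne
        rcases Finset.mem_insert.1 hp with he | hp
        · rw [he]
          show L.lt m S.qt t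
          exact hqt_t
        rcases Finset.mem_insert.1 hp with he | hp
        · rw [he]
          show L.lt m S.qt S.c
          exact hS.sep3
        · exact hS.desc.ran_lt p hp hne
      · exact hS.desc.c_lt
      · exact hS.desc.qZ
      · exact hS.desc.Zgq
    · exact L.trans m _ _ _ hS.sep1 l6
    · exact L.trans m _ _ _ hS.sep2 hqgq
    · exact L.trans m _ _ _ hS.sep3 l6
    · exact L.trans m _ _ _ hS.sep4 hqgq
    · show gp S.q = (gp ^ (S.qi + 1)) a
      rw [orb_succ, ← hS.qval]
    · exact hS.qtval
  -- === descending link ===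
  set W2 : Finset M := ((Finset.range (s + 2)).image e) ∪ {gp⁻¹ t, gp S.q, gp⁻¹ (gp S.q)}
    with hW2
  obtain ⟨vt, tt, r1, r2, r3, r4, r5, r6, r7, r8⟩ := link hLop m hgop (a := b) hb1 hb2
    (fpi_op_swap hv1.fpi) hv1.desc W2
  have hctt : gp (gp⁻¹ tt) = tt := Equiv.Perm.apply_inv_self gp tt
  have hmcW2 : gp⁻¹ t ∈ W2 := by simp [hW2]
  have hmqW2 : gp S.q ∈ W2 := by simp [hW2]
  have hgqW2 : gp⁻¹ (gp S.q) ∈ W2 := by simp [hW2]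
  have heW2 : ∀ j ≤ s + 1, e j ∈ W2 := by
    intro j hj
    simp only [hW2, Finset.mem_union, Finset.mem_image, Finset.mem_range]
    exact Or.inl ⟨j, by omega, rfl⟩
  have htt_q : L.lt m tt (gp S.q) := by
    have h1 : L.lt m (gp⁻¹ tt) (gp⁻¹ (gp S.q)) := r5 _ hgqW2
    have h2 := (hg m (gp⁻¹ tt) (gp⁻¹ (gp S.q))).1 h1
    rwa [hctt, Equiv.Perm.apply_inv_self] at h2
  set P2 : Finset (M × M) := insert (gp vt, tt) (insert (vt, S.ct) P1) with hP2
  have hsw2 : P2.image Prod.swap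
      = insert (tt, gp vt) (insert (S.ct, vt) (P1.image Prod.swap)) := by
    rw [hP2, Finset.image_insert, Finset.image_insert]
    rfl
  have hv2 : Valid L m gp a b ⟨P2, gp⁻¹ t, gp S.q, gp v, gp⁻¹ tt, gp S.qt, gp vt,
      S.qi + 1, S.qti + 1⟩ := by
    refine ⟨?_, ?_, ?_, ?_, ?_, ?_, ?_, ?_, ?_⟩
    · exact fpi_op_swap_back (by rw [hsw2]; exact r7)
    · constructor
      · exact Finset.mem_insert_of_mem (Finset.mem_insert_of_mem l8.pairZ)
      · intro p hp hne
        rcases Finset.mem_insert.1 hp with he | hp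
        · rw [he]
          show L.lt m (gp vt) (gp⁻¹ t)
          have h1 : L.lt m (gp vt) S.c := by
            have := r4 (v, S.c) (Finset.mem_image.2 ⟨(S.c, v),
              Finset.mem_insert_of_mem (Finset.mem_insert_self _ _), rfl⟩)
            exact this
          exact L.trans m _ _ _ h1 l6
        rcases Finset.mem_insert.1 hp with he | hp
        · rw [he]
          show L.lt m vt (gp⁻¹ t)
          have h1 : L.lt m vt S.qt := r2
          exact L.trans m _ _ _ h1 hv1.sep3
        · exact l8.dom_lt p hp hne
      · intro p hp hne
        rcases Finset.mem_insert.1 hp with he | hp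
        · rw [he]
          show L.lt m tt (gp S.q)
          exact htt_q
        rcases Finset.mem_insert.1 hp with he | hp
        · rw [he]
          show L.lt m S.ct (gp S.q)
          exact hv1.sep2
        · exact l8.ran_lt p hp hne
      · exact l8.c_lt
      · exact l8.qZ
      · exact l8.Zgq
    · show AscData (opL L) m gp (P2.image Prod.swap) (gp⁻¹ tt) (gp S.qt) (gp vt)
      rw [hsw2]
      exact r8
    · exact r5 _ hmcW2
    · exact r5 _ hmqW2
    · have h1 : L.lt m (gp S.qt) S.Zt := hS.gqtZt
      have h2 : L.lt m S.Zt S.qt := hS.Ztqt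
      exact L.trans m _ _ _ h1 (L.trans m _ _ _ h2 hv1.sep3)
    · have h1 : L.lt m (gp S.qt) S.Zt := hS.gqtZt
      have h2 : L.lt m S.Zt S.qt := hS.Ztqt
      exact L.trans m _ _ _ h1 (L.trans m _ _ _ h2 hv1.sep4)
    · show gp S.q = (gp ^ (S.qi + 1)) a
      rw [orb_succ, ← hS.qval]
    · show gp S.qt = (gp ^ (S.qti + 1)) b
      rw [orb_succ, ← hS.qtval]
  -- === housekeeping ===
  obtain ⟨S3, hv3, sub3, e3c, e3q, e3Z, e3ct, e3qt, e3Zt, e3qi, e3qti, guar3⟩ :=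
    hkStepDom hL m _ hv2 x0
  obtain ⟨S4, hv4, sub4, e4c, e4q, e4Z, e4ct, e4qt, e4Zt, e4qi, e4qti, guar4⟩ :=
    hkStepRan hL m S3 hv3 x0
  have sub01 : S.P ⊆ P1 :=
    Finset.Subset.trans (Finset.subset_insert _ _) (Finset.subset_insert _ _)
  have sub12 : P1 ⊆ P2 :=
    Finset.Subset.trans (Finset.subset_insert _ _) (Finset.subset_insert _ _)
  have sub24 : P2 ⊆ S4.P := Finset.Subset.trans sub3 sub4
  have sub14 : P1 ⊆ S4.P := Finset.Subset.trans sub12 sub24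
  refine ⟨S4, hv4, Finset.Subset.trans sub01 sub14, ?_, ?_, ?_, ?_, ?_, ?_, ?_, ?_, ?_⟩
  · refine ⟨v, sub14 (Finset.mem_insert_of_mem (Finset.mem_insert_self _ _)), ?_⟩
    rw [e4c, e3c]
    show (gp (gp⁻¹ t), gp v) ∈ S4.P
    rw [hct]
    exact sub14 (Finset.mem_insert_self _ _)
  · refine ⟨vt, sub24 (Finset.mem_insert_of_mem (Finset.mem_insert_self _ _)), ?_, r2⟩
    rw [e4ct, e3ct]
    show (gp vt, gp (gp⁻¹ tt)) ∈ S4.P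
    rw [hctt]
    exact sub24 (Finset.mem_insert_self _ _)
  · rw [e4c, e3c]
    exact l6
  · intro j hj
    rw [e4c, e3c]
    exact l5 _ (heW1 j hj)
  · intro j hj
    rw [e4ct, e3ct]
    exact r5 _ (heW2 j hj)
  · rw [e4qi, e3qi]
  · rw [e4qti, e3qti]
  · intro h1 h2
    rw [e4qt, e3qt] at h1
    rw [e4c, e3c] at h2
    obtain ⟨y, hy⟩ := guar3 h1 h2
    exact ⟨y, sub4 hy⟩
  · intro h1 h2
    rw [e4ct] at h1
    rw [e4q] at h2
    exact guar4 h1 h2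

end FullStepSec

end Stmt11

namespace Stmt11

section InitSec

variable {n : ℕ} {M : Type*} [DecidableEq M]
variable {L : NLinear n M} {gp : Equiv.Perm M} {a b : M}

theorem fpi_singleton (L : NLinear n M) (p : M × M) : FPI L {p} := by
  intro q hq q' hq' i
  rw [Finset.mem_singleton] at hq hq'
  rw [hq, hq']
  exact iff_of_false (L.irrefl i p.1) (L.irrefl i p.2)

theorem initStep (hL : IsUniversalNLinear n M L) (m : Fin n)
    (hg : ∀ i x y, L.lt i x y ↔ L.lt i (gp x) (gp y))
    (ha1 : L.lt m a (gp a)) (ha2 : ∀ x, ∃ k : ℤ, L.lt m x ((gp ^ k) a))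
    (hb1 : L.lt m (gp b) b) (hb2 : ∀ x, ∃ k : ℤ, L.lt m ((gp ^ k) b) x) :
    ∃ S0 : UStep M, Valid L m gp a b S0 ∧
      ∃ pd, (pd, gp⁻¹ S0.Z) ∈ S0.P ∧ (gp pd, gp S0.ct) ∈ S0.P := by
  classical
  have hgop : ∀ i x y, (opL L).lt i x y ↔ (opL L).lt i (gp x) (gp y) :=
    fun i x y => hg i y x
  have orb_below : ∀ S : Finset M, ∃ K : ℤ, ∀ s ∈ S, L.lt m ((gp ^ K) b) s :=
    fun S => orb_above (L := opL L) hgop hb1 hb2 S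
  have bmono : ∀ k : ℤ, L.lt m ((gp ^ (k + 1)) b) ((gp ^ k) b) :=
    fun k => orb_mono (L := opL L) hgop hb1 k
  -- the fresh point Z0 between a and gp a
  obtain ⟨Z0, hZ0A, hZ0cut⟩ := hL.extension {a, gp a} (fun i => {x | i = m ∧ x = a})
    (by
      intro i x hx
      obtain ⟨-, rfl⟩ := hx
      simp)
    (by
      intro i x hxA y hyA hxy hyD
      obtain ⟨him, rfl⟩ := hyD
      subst him
      exfalso
      rcases Finset.mem_insert.1 hxA with rfl | hxA
      · exact L.irrefl i x hxy
      · rw [Finset.mem_singleton] at hxA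
        subst hxA
        exact ltAsymm L ha1 hxy)
  have haZ0 : L.lt m a Z0 := (hZ0cut m a (by simp)).2 ⟨rfl, rfl⟩
  have hZ0ga : L.lt m Z0 (gp a) := by
    have hne : gp a ≠ Z0 := fun he => hZ0A (he ▸ (by simp : gp a ∈ ({a, gp a} : Finset M)))
    have hnot : ¬ L.lt m (gp a) Z0 := by
      intro h
      have h2 := (hZ0cut m (gp a) (by simp)).1 h
      exact ltNe L ha1 h2.2.symm
    exact ltOfNeNot L hne hnot
  -- the base chain point c0
  set c0 : M := (gp ^ (5 : ℤ)) a with hc0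
  have hc0lt : L.lt m c0 (gp c0) := by
    have h := orb_mono hg ha1 5
    rwa [orb_succ] at h
  have hgac0 : L.lt m (gp a) c0 := by
    have h := orb_lt hg ha1 (show (1 : ℤ) < 5 by norm_num)
    rwa [zpow_one] at h
  have hZ0c0 : L.lt m Z0 c0 := L.trans m _ _ _ hZ0ga hgac0
  have hac0 : L.lt m a c0 := L.trans m _ _ _ ha1 hgac0
  set u1 : M := gp⁻¹ Z0 with hu1
  have hu1a : L.lt m u1 a := by
    have h := (auto_inv hg m Z0 (gp a)).1 hZ0ga
    rwa [Equiv.Perm.inv_apply_self] at h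
  have hu1Z0 : L.lt m u1 Z0 := L.trans m _ _ _ hu1a haZ0
  -- first low selection
  obtain ⟨K, hK⟩ := orb_below {a, Z0, u1, c0, gp c0}
  set bK : M := (gp ^ K) b with hbK
  set bK1 : M := (gp ^ (K + 1)) b with hbK1
  have hbK1K : L.lt m bK1 bK := bmono K
  have hbKa : L.lt m bK a := hK a (by simp)
  have hbKZ0 : L.lt m bK Z0 := hK Z0 (by simp)
  have hbKu1 : L.lt m bK u1 := hK u1 (by simp)
  have hbKc0 : L.lt m bK c0 := hK c0 (by simp)
  have hbKgc0 : L.lt m bK (gp c0) := hK (gp c0) (by simp)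
  -- choose pd, the preimage of u1
  obtain ⟨pd, hpd1, hpdnl, hpdnu, -, hpdcut, hpdlow, hpdupp, hfpib⟩ :=
    workhorsePre hL m {(gp c0, Z0)} (fpi_singleton L _) u1
      (by
        intro p hp
        rw [Finset.mem_singleton] at hp
        subst hp
        exact ltNe' L hu1Z0)
      {bK1} {bK} ∅
      (by
        intro l hl p hp _
        rw [Finset.mem_singleton] at hl hp
        subst hl
        subst hp
        exact L.trans m _ _ _ hbK1K hbKgc0)
      (by
        intro u hu
        rw [Finset.mem_singleton] at hu
        subst hu
        constructor
        · intro p hp hlt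
          rw [Finset.mem_singleton] at hp
          subst hp
          exact absurd hlt (ltAsymm L hu1Z0)
        · intro l hl
          rw [Finset.mem_singleton] at hl
          subst hl
          exact hbK1K)
  have hbK1pd : L.lt m bK1 pd := hpdlow bK1 (Finset.mem_singleton_self _)
  have hpdbK : L.lt m pd bK := hpdupp bK (Finset.mem_singleton_self _)
  set gpd : M := gp pd with hgpd
  have hgpdbK1 : L.lt m gpd bK1 := by
    have h := (hg m pd bK).1 hpdbK
    rwa [show gp bK = bK1 from (orb_succ gp b K).symm] at h
  have hbK2gpd : L.lt m ((gp ^ (K + 2)) b) gpd := by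
    have h := (hg m bK1 pd).1 hbK1pd
    rwa [show gp bK1 = (gp ^ (K + 2)) b by
      rw [hbK1, ← orb_succ]
      ring_nf] at h
  have hgpdpd : L.lt m gpd pd := L.trans m _ _ _ hgpdbK1 hbK1pd
  have hgpdgc0 : L.lt m gpd (gp c0) :=
    L.trans m _ _ _ hgpdbK1 (L.trans m _ _ _ hbK1K hbKgc0)
  have hgpdc0 : L.lt m gpd c0 :=
    L.trans m _ _ _ hgpdbK1 (L.trans m _ _ _ hbK1K hbKc0)
  -- second low selection
  obtain ⟨J0, hJ0⟩ := orb_below {u1, Z0}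
  set bJ0 : M := (gp ^ J0) b with hbJ0
  set bJ : M := (gp ^ (J0 + 1)) b with hbJ
  set bJ1 : M := (gp ^ (J0 + 1 + 1)) b with hbJ1
  have hbJJ0 : L.lt m bJ bJ0 := bmono J0
  have hbJ1J : L.lt m bJ1 bJ := bmono (J0 + 1)
  have hbJ0u1 : L.lt m bJ0 u1 := hJ0 u1 (by simp)
  have hbJ0Z0 : L.lt m bJ0 Z0 := hJ0 Z0 (by simp)
  have hbJu1 : L.lt m bJ u1 := L.trans m _ _ _ hbJJ0 hbJ0u1
  have hbJZ0 : L.lt m bJ Z0 := L.trans m _ _ _ hbJJ0 hbJ0Z0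
  -- choose w, the image of gpd
  set P0b : Finset (M × M) := insert (pd, u1) {(gp c0, Z0)} with hP0b
  obtain ⟨w, hw1, hwnl, hwnu, -, hwcut, hwlow, hwupp, hfpi0⟩ :=
    workhorse hL m P0b hfpib gpd
      (by
        intro p hp
        rcases Finset.mem_insert.1 hp with he | hp
        · rw [he]
          exact ltNe' L hgpdpd
        · rw [Finset.mem_singleton] at hp
          subst hp
          exact ltNe' L hgpdgc0)
      {bJ1} {bJ} ∅
      (by
        intro l hl p hp _
        rw [Finset.mem_singleton] at hl
        subst hl
        rcases Finset.mem_insert.1 hp with he | hp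
        · rw [he]
          exact L.trans m _ _ _ hbJ1J hbJu1
        · rw [Finset.mem_singleton] at hp
          subst hp
          exact L.trans m _ _ _ hbJ1J hbJZ0)
      (by
        intro u hu
        rw [Finset.mem_singleton] at hu
        subst hu
        constructor
        · intro p hp hlt
          rcases Finset.mem_insert.1 hp with he | hp
          · rw [he] at hlt
            exact absurd hlt (ltAsymm L hgpdpd)
          · rw [Finset.mem_singleton] at hp
            subst hp
            exact absurd hlt (ltAsymm L hgpdgc0)
        · intro l hl
          rw [Finset.mem_singleton] at hl
          subst hl
          exact hbJ1J)
  have hbJ1w : L.lt m bJ1 w := hwlow bJ1 (Finset.mem_singleton_self _)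
  have hwbJ : L.lt m w bJ := hwupp bJ (Finset.mem_singleton_self _)
  have hwu1 : L.lt m w u1 := L.trans m _ _ _ hwbJ hbJu1
  have hwZ0 : L.lt m w Z0 := L.trans m _ _ _ hwbJ hbJZ0
  set ct0 : M := gp⁻¹ w with hct0
  have hgct0 : gp ct0 = w := Equiv.Perm.apply_inv_self gp w
  have hgww : L.lt m (gp w) w := by
    have h := (hg m w bJ).1 hwbJ
    rw [show gp bJ = bJ1 by rw [hbJ1, ← orb_succ]] at h
    exact L.trans m _ _ _ h hbJ1w
  have hwct0 : L.lt m w ct0 := by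
    have h := (auto_inv hg m (gp w) w).1 hgww
    rwa [Equiv.Perm.inv_apply_self] at h
  have hct0bJ0 : L.lt m ct0 bJ0 := by
    have h := (auto_inv hg m w bJ).1 hwbJ
    rwa [hbJ, orb_pred] at h
  have hct0u1 : L.lt m ct0 u1 := L.trans m _ _ _ hct0bJ0 hbJ0u1
  have hct0Z0 : L.lt m ct0 Z0 := L.trans m _ _ _ hct0bJ0 hbJ0Z0
  have hct0a : L.lt m ct0 a := L.trans m _ _ _ hct0u1 hu1a
  have hct0c0 : L.lt m ct0 c0 := L.trans m _ _ _ hct0a hac0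
  -- the initial state
  set P0 : Finset (M × M) := insert (gpd, w) P0b with hP0
  have hmem1 : (gp c0, Z0) ∈ P0 := by
    rw [hP0, hP0b]
    exact Finset.mem_insert_of_mem (Finset.mem_insert_of_mem (Finset.mem_singleton_self _))
  have hmem2 : (pd, u1) ∈ P0 := by
    rw [hP0, hP0b]
    exact Finset.mem_insert_of_mem (Finset.mem_insert_self _ _)
  have hmem3 : (gpd, w) ∈ P0 := Finset.mem_insert_self _ _
  have hsw0 : P0.image Prod.swap
      = insert (w, gpd) (insert (u1, pd) {(Z0, gp c0)}) := by
    rw [hP0, hP0b, Finset.image_insert, Finset.image_insert, Finset.image_singleton]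
    rfl
  refine ⟨⟨P0, c0, a, Z0, ct0, bK1, gpd, 0, K + 1⟩, ?_, pd, hmem2, ?_⟩
  swap
  · show (gp pd, gp ct0) ∈ P0
    rw [hgct0]
    exact hmem3
  refine ⟨hfpi0, ?_, ?_, hct0c0, hct0a, ?_, ?_, ?_, rfl⟩
  · -- asc
    constructor
    · exact hmem1
    · intro p hp hne
      rcases Finset.mem_insert.1 hp with he | hp
      · rw [he]
        exact hgpdc0
      rcases Finset.mem_insert.1 hp with he | hp
      · rw [he]
        exact L.trans m _ _ _ hpdbK hbKc0
      · rw [Finset.mem_singleton] at hp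
        exact absurd (by rw [hp]) hne
    · intro p hp hne
      rcases Finset.mem_insert.1 hp with he | hp
      · rw [he]
        exact L.trans m _ _ _ hwu1 hu1a
      rcases Finset.mem_insert.1 hp with he | hp
      · rw [he]
        exact hu1a
      · rw [Finset.mem_singleton] at hp
        exact absurd (by rw [hp]) hne
    · exact hc0lt
    · exact haZ0
    · exact hZ0ga
  · -- desc
    show AscData (opL L) m gp (P0.image Prod.swap) ct0 bK1 gpd
    rw [hsw0]
    constructor
    · rw [hgct0]
      exact Finset.mem_insert_self _ _
    · intro p hp hne
      rw [hgct0] at hne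
      rcases Finset.mem_insert.1 hp with he | hp
      · exact absurd (by rw [he]) hne
      rcases Finset.mem_insert.1 hp with he | hp
      · rw [he]
        show L.lt m ct0 u1
        exact hct0u1
      · rw [Finset.mem_singleton] at hp
        rw [hp]
        show L.lt m ct0 Z0
        exact hct0Z0
    · intro p hp hne
      rw [hgct0] at hne
      rcases Finset.mem_insert.1 hp with he | hp
      · exact absurd (by rw [he]) hne
      rcases Finset.mem_insert.1 hp with he | hp
      · rw [he]
        show L.lt m bK1 pd
        exact hbK1pd
      · rw [Finset.mem_singleton] at hp
        rw [hp]
        show L.lt m bK1 (gp c0)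
        exact L.trans m _ _ _ hbK1K hbKgc0
    · show L.lt m (gp ct0) ct0
      rw [hgct0]
      exact hwct0
    · show L.lt m gpd bK1
      exact hgpdbK1
    · show L.lt m (gp bK1) gpd
      rw [show gp bK1 = (gp ^ (K + 2)) b by rw [hbK1, ← orb_succ]; ring_nf]
      exact hbK2gpd
  · -- sep3
    exact L.trans m _ _ _ hbK1K hbKc0
  · -- sep4
    exact L.trans m _ _ _ hbK1K hbKa
  · -- qval
    simp

end InitSec

end Stmt11

namespace Stmt11

section BuildSec

variable {n : ℕ} {M : Type*} [DecidableEq M]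
variable {L : NLinear n M} {gp : Equiv.Perm M} {a b : M}

noncomputable def seqS (hL : IsUniversalNLinear n M L) (m : Fin n)
    (hg : ∀ i x y, L.lt i x y ↔ L.lt i (gp x) (gp y))
    (ha1 : L.lt m a (gp a)) (ha2 : ∀ x, ∃ k : ℤ, L.lt m x ((gp ^ k) a))
    (hb1 : L.lt m (gp b) b) (hb2 : ∀ x, ∃ k : ℤ, L.lt m ((gp ^ k) b) x)
    (e : ℕ ≃ M) (init : {S : UStep M // Valid L m gp a b S}) :
    ℕ → {S : UStep M // Valid L m gp a b S} :=
  fun s => Nat.rec init (fun s T =>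
    ⟨Classical.choose (fullStep hL m hg ha1 ha2 hb1 hb2 e s T.1 T.2),
     (Classical.choose_spec (fullStep hL m hg ha1 ha2 hb1 hb2 e s T.1 T.2)).1⟩) s

theorem seqS_good (hL : IsUniversalNLinear n M L) (m : Fin n)
    (hg : ∀ i x y, L.lt i x y ↔ L.lt i (gp x) (gp y))
    (ha1 : L.lt m a (gp a)) (ha2 : ∀ x, ∃ k : ℤ, L.lt m x ((gp ^ k) a))
    (hb1 : L.lt m (gp b) b) (hb2 : ∀ x, ∃ k : ℤ, L.lt m ((gp ^ k) b) x)
    (e : ℕ ≃ M) (init : {S : UStep M // Valid L m gp a b S}) (s : ℕ) :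
    Good L m gp e s (seqS hL m hg ha1 ha2 hb1 hb2 e init s).1
      (seqS hL m hg ha1 ha2 hb1 hb2 e init (s + 1)).1 :=
  (Classical.choose_spec (fullStep hL m hg ha1 ha2 hb1 hb2 e s
    (seqS hL m hg ha1 ha2 hb1 hb2 e init s).1
    (seqS hL m hg ha1 ha2 hb1 hb2 e init s).2)).2

end BuildSec

end Stmt11

open Stmt11

/-- Let `g` be an automorphism of a universal `n`-linear order that
has, with respect to `<_m`, a `+`-orbital unbounded above and a `−`-orbital unbounded
below. Then there is an automorphism `h` such that the commutator `g⁻¹ ∘ h⁻¹ ∘ g ∘ h`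
has a single `+`-orbital with respect to `<_m`. -/
theorem stmt11 {n : ℕ} {M : Type*} (L : NLinear n M) (hL : IsUniversalNLinear n M L)
    (m : Fin n) (g : L.aut)
    (h1 : L.PlusUnbAbove m (g : Equiv.Perm M))
    (h2 : L.MinusUnbBelow m (g : Equiv.Perm M)) :
    ∃ h : L.aut, L.SinglePlus m ((g⁻¹ * h⁻¹ * g * h : L.aut) : Equiv.Perm M) := by
  classical
  obtain ⟨a, ha1, ha2⟩ := h1
  obtain ⟨b, hb1, hb2⟩ := h2
  set gp : Equiv.Perm M := (g : Equiv.Perm M) with hgp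
  have hg : ∀ i x y, L.lt i x y ↔ L.lt i (gp x) (gp y) := g.2
  have hgop : ∀ i x y, (opL L).lt i x y ↔ (opL L).lt i (gp x) (gp y) :=
    fun i x y => hg i y x
  haveI : Countable M := hL.countable
  haveI : Infinite M := hL.infinite
  obtain ⟨e⟩ : Nonempty (ℕ ≃ M) := nonempty_equiv_of_countable
  obtain ⟨S0, hS0, pd, hpd1, hpd2⟩ := initStep hL m hg ha1 ha2 hb1 hb2
  set Q : ℕ → {S : UStep M // Valid L m gp a b S} :=
    seqS hL m hg ha1 ha2 hb1 hb2 e ⟨S0, hS0⟩ with hQdef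
  have hGood : ∀ s, Good L m gp e s (Q s).1 (Q (s + 1)).1 :=
    fun s => seqS_good hL m hg ha1 ha2 hb1 hb2 e ⟨S0, hS0⟩ s
  -- monotonicity of the pair sets
  have hmono : ∀ s t : ℕ, s ≤ t → (Q s).1.P ⊆ (Q t).1.P := by
    intro s t hst
    induction t, hst using Nat.le_induction with
    | base => exact Finset.Subset.refl _
    | succ t hst ih => exact ih.trans (hGood t).1
  have hcompat : ∀ {s t : ℕ} {p p' : M × M}, p ∈ (Q s).1.P → p' ∈ (Q t).1.P →
      ∀ i, L.lt i p.1 p'.1 ↔ L.lt i p.2 p'.2 := by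
    intro s t p p' hp hp' i
    exact (Q (max s t)).2.fpi p (hmono s _ (le_max_left s t) hp)
      p' (hmono t _ (le_max_right s t) hp') i
  -- marker index arithmetic
  have hqi : ∀ s : ℕ, (Q s).1.qi = S0.qi + s := by
    intro s
    induction s with
    | zero =>
        show S0.qi = S0.qi + ((0 : ℕ) : ℤ)
        simp
    | succ s ih =>
        have h7 := (hGood s).2.2.2.2.2.2.1
        rw [h7, ih]
        push_cast
        ring
  have hqti : ∀ s : ℕ, (Q s).1.qti = S0.qti + s := by
    intro s
    induction s with
    | zero =>
        show S0.qti = S0.qti + ((0 : ℕ) : ℤ)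
        simp
    | succ s ih =>
        have h8 := (hGood s).2.2.2.2.2.2.2.1
        rw [h8, ih]
        push_cast
        ring
  have hq_hi : ∀ x : M, ∃ s0 : ℕ, ∀ s ≥ s0, L.lt m x (Q s).1.q := by
    intro x
    obtain ⟨k, hk⟩ := ha2 x
    refine ⟨(k - S0.qi).toNat + 1, ?_⟩
    intro s hs
    have hlt : k < S0.qi + (s : ℤ) := by omega
    have hh2 := orb_lt hg ha1 hlt
    rw [(Q s).2.qval, hqi s]
    exact L.trans m _ _ _ hk hh2
  have hqt_lo : ∀ x : M, ∃ s0 : ℕ, ∀ s ≥ s0, L.lt m (Q s).1.qt x := by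
    intro x
    obtain ⟨k, hk⟩ := hb2 x
    refine ⟨(k - S0.qti).toNat + 1, ?_⟩
    intro s hs
    have hlt : k < S0.qti + (s : ℤ) := by omega
    have hh2 : L.lt m ((gp ^ (S0.qti + (s : ℤ))) b) ((gp ^ k) b) :=
      orb_lt (L := opL L) hgop hb1 hlt
    rw [(Q s).2.qtval, hqti s]
    exact L.trans m _ _ _ hh2 hk
  -- every point appears in the domain and the range
  have htot : ∀ x : M, ∃ s y, (x, y) ∈ (Q s).1.P := by
    intro x
    obtain ⟨s1, hs1⟩ := hqt_lo x
    obtain ⟨j, rfl⟩ : ∃ j, e j = x := ⟨e.symm x, Equiv.apply_symm_apply e x⟩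
    refine ⟨Nat.pair j (max s1 (j + 1)) + 1, ?_⟩
    have hs_ge : max s1 (j + 1) ≤ Nat.pair j (max s1 (j + 1)) := Nat.right_le_pair _ _
    obtain ⟨-, -, -, -, g5, -, -, -, g9, -⟩ := hGood (Nat.pair j (max s1 (j + 1)))
    simp only [Nat.unpair_pair] at g9
    exact g9 (hs1 _ (by omega)) (g5 j (by omega))
  have hsur : ∀ x : M, ∃ s w, (w, x) ∈ (Q s).1.P := by
    intro x
    obtain ⟨s1, hs1⟩ := hq_hi x
    obtain ⟨j, rfl⟩ : ∃ j, e j = x := ⟨e.symm x, Equiv.apply_symm_apply e x⟩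
    refine ⟨Nat.pair j (max s1 (j + 1)) + 1, ?_⟩
    have hs_ge : max s1 (j + 1) ≤ Nat.pair j (max s1 (j + 1)) := Nat.right_le_pair _ _
    obtain ⟨-, -, -, -, -, g6, -, -, -, g10⟩ := hGood (Nat.pair j (max s1 (j + 1)))
    simp only [Nat.unpair_pair] at g10
    exact g10 (g6 j (by omega)) (hs1 _ (by omega))
  -- the function h
  have htot' : ∀ x : M, ∃ y, ∃ s, (x, y) ∈ (Q s).1.P := by
    intro x
    obtain ⟨s, y, hxy⟩ := htot x
    exact ⟨y, s, hxy⟩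
  set hf : M → M := fun x => Classical.choose (htot' x) with hhf
  have hfspec : ∀ x, ∃ s, (x, hf x) ∈ (Q s).1.P := fun x => Classical.choose_spec (htot' x)
  have hfeq : ∀ {s : ℕ} {x y : M}, (x, y) ∈ (Q s).1.P → hf x = y := by
    intro s x y hxy
    obtain ⟨s', hs'⟩ := hfspec x
    exact fpi_snd_unique m (Q (max s' s)).2.fpi (hmono s' _ (le_max_left _ _) hs')
      (hmono s _ (le_max_right _ _) hxy)
  have hfinj : Function.Injective hf := by
    intro x y hxy
    obtain ⟨s1, hp1⟩ := hfspec x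
    obtain ⟨s2, hp2⟩ := hfspec y
    rw [hxy] at hp1
    exact fpi_fst_unique m (Q (max s1 s2)).2.fpi (hmono s1 _ (le_max_left _ _) hp1)
      (hmono s2 _ (le_max_right _ _) hp2)
  have hfsur : Function.Surjective hf := by
    intro z
    obtain ⟨s, w, hw⟩ := hsur z
    exact ⟨w, hfeq hw⟩
  set hperm : Equiv.Perm M := Equiv.ofBijective hf ⟨hfinj, hfsur⟩ with hhperm
  have hpermapp : ∀ x, hperm x = hf x := fun x => rfl
  have hmemaut : hperm ∈ L.aut := by
    intro i x y
    obtain ⟨s1, hp1⟩ := hfspec x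
    obtain ⟨s2, hp2⟩ := hfspec y
    exact hcompat hp1 hp2 i
  refine ⟨⟨hperm, hmemaut⟩, ?_⟩
  set F : Equiv.Perm M := ((g⁻¹ * ⟨hperm, hmemaut⟩⁻¹ * g * ⟨hperm, hmemaut⟩ : L.aut) :
    Equiv.Perm M) with hFdef
  have hFapp : ∀ x, F x = gp⁻¹ (hperm⁻¹ (gp (hperm x))) := fun x => rfl
  have hFinvapp : ∀ x, F⁻¹ x = hperm⁻¹ (gp⁻¹ (hperm (gp x))) := by
    intro x
    have hFeq : F = gp⁻¹ * hperm⁻¹ * gp * hperm := rfl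
    rw [hFeq]
    simp [mul_inv_rev, Equiv.Perm.mul_apply]
  have hfinvver : ∀ {s : ℕ} {u z : M}, (u, z) ∈ (Q s).1.P → hperm⁻¹ z = u := by
    intro s u z hu
    have h := hfeq hu
    rw [← h, ← hpermapp, Equiv.Perm.inv_apply_self]
  -- the positive chain
  have hchain : ∀ s, F ((Q s).1.c) = (Q (s + 1)).1.c := by
    intro s
    obtain ⟨-, ⟨v, hv1, hv2⟩, -⟩ := hGood s
    rw [hFapp, hpermapp, hfeq hv1, hfinvver hv2, Equiv.Perm.inv_apply_self]
  have hpow : ∀ s : ℕ, (F ^ s) S0.c = (Q s).1.c := by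
    intro s
    induction s with
    | zero => rfl
    | succ s ih => rw [pow_succ', Equiv.Perm.mul_apply, ih, hchain s]
  -- the negative chain
  have hdesc : ∀ s, ∃ w, (w, (Q s).1.ct) ∈ (Q (s + 1)).1.P ∧
      (gp w, gp ((Q (s + 1)).1.ct)) ∈ (Q (s + 1)).1.P ∧ L.lt m w (Q s).1.qt :=
    fun s => (hGood s).2.2.1
  set wseq : ℕ → M := fun s => Classical.choose (hdesc s) with hwseq
  have hwspec : ∀ s, (wseq s, (Q s).1.ct) ∈ (Q (s + 1)).1.P ∧
      (gp (wseq s), gp ((Q (s + 1)).1.ct)) ∈ (Q (s + 1)).1.P ∧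
      L.lt m (wseq s) (Q s).1.qt := fun s => Classical.choose_spec (hdesc s)
  have hFinvchain : ∀ s, F⁻¹ (wseq s) = wseq (s + 1) := by
    intro s
    rw [hFinvapp, hpermapp, hfeq (hwspec s).2.1, Equiv.Perm.inv_apply_self,
      hfinvver (hwspec (s + 1)).1]
  have hbase1 : F⁻¹ S0.c = pd := by
    rw [hFinvapp, hpermapp, hfeq (s := 0) hS0.asc.pairZ]
    exact hfinvver (s := 0) hpd1
  have hbase2 : F⁻¹ pd = wseq 0 := by
    rw [hFinvapp, hpermapp, hfeq (s := 0) hpd2, Equiv.Perm.inv_apply_self]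
    exact hfinvver (hwspec 0).1
  have hnegpow : ∀ s : ℕ, ((F⁻¹) ^ (s + 2)) S0.c = wseq s := by
    intro s
    induction s with
    | zero =>
        show ((F⁻¹) ^ 2) S0.c = wseq 0
        rw [sq, Equiv.Perm.mul_apply, hbase1, hbase2]
    | succ s ih =>
        have : s + 1 + 2 = (s + 2) + 1 := by omega
        rw [this, pow_succ', Equiv.Perm.mul_apply, ih, hFinvchain]
  -- conclusion
  refine ⟨S0.c, ?_, ?_, ?_⟩
  · rw [show F S0.c = (Q 1).1.c from hchain 0]
    exact (hGood 0).2.2.2.1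
  · intro x
    obtain ⟨j, rfl⟩ : ∃ j, e j = x := ⟨e.symm x, Equiv.apply_symm_apply e x⟩
    refine ⟨((j + 1 : ℕ) : ℤ), ?_⟩
    rw [zpow_natCast, hpow]
    exact (hGood j).2.2.2.2.1 j (by omega)
  · intro x
    obtain ⟨s0, hs0⟩ := hqt_lo x
    refine ⟨-((s0 + 2 : ℕ) : ℤ), ?_⟩
    rw [zpow_neg, zpow_natCast, ← inv_pow, hnegpow s0]
    exact L.trans m _ _ _ (hwspec s0).2.2 (hs0 s0 (le_refl s0))
end

section
/- Let n ≥ 2, let M be a universal n-linear order, let m ∈ {1, …, n}, and let g ∈ Aut(M) with g ≠ id. Then g is unbounded with respect to <_m. -/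
/-!
Pick a point `c` moved by `g` and an index `i ≠ m` (this is where `n ≥ 2` enters). If `g` fixed
every point above (or below) `a` in `<_m`, the extension property would give such a fixed point
`x` lying strictly between `c` and `g c` in `<_i`. But `g` preserves `<_i` and fixes `x`, so `c`
and `g c` must lie on the same side of `x`.
-/

namespace NLinear

variable {n : ℕ} {M : Type*} (L : NLinear n M)

def IsLowerIn (j : Fin n) (A : Finset M) (D : Set M) : Prop :=
  D ⊆ A ∧ ∀ a ∈ A, ∀ b ∈ A, L.lt j a b → b ∈ D → a ∈ D

lemma isLowerIn_empty (j : Fin n) (A : Finset M) : L.IsLowerIn j A ∅ :=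
  ⟨Set.empty_subset _, fun _ _ _ _ _ h => h.elim⟩

lemma isLowerIn_not_lt (j : Fin n) (A : Finset M) (t : M) :
    L.IsLowerIn j A {u | u ∈ A ∧ ¬ L.lt j t u} :=
  ⟨fun _ hu => hu.1, fun a ha b _ hab hb => ⟨ha, fun hta => hb.2 (L.trans j t a b hta hab)⟩⟩

lemma isLowerIn_lt (j : Fin n) (A : Finset M) (t : M) :
    L.IsLowerIn j A {u | u ∈ A ∧ L.lt j u t} :=
  ⟨fun _ hu => hu.1, fun a ha b _ hab hb => ⟨ha, L.trans j a b t hab hb.2⟩⟩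

lemma lt_of_not_lt_of_ne {j : Fin n} {a b : M} (h : ¬ L.lt j a b) (hne : a ≠ b) : L.lt j b a :=
  ((L.total j a b).resolve_left h).resolve_left hne

lemma lt_iff_lt_of_apply_eq {g : Equiv.Perm M} (hg : g ∈ L.aut) {x : M} (hx : g x = x)
    (i : Fin n) (c : M) : L.lt i c x ↔ L.lt i (g c) x := by
  simpa only [hx] using hg i c x

end NLinear

namespace IsUniversalNLinear

variable {n : ℕ} {M : Type*} {L : NLinear n M} {i m : Fin n}

theorem exists_two_cuts (hL : IsUniversalNLinear n M L) (him : i ≠ m) {A : Finset M}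
    {Di Dm : Set M} (hi : L.IsLowerIn i A Di) (hm : L.IsLowerIn m A Dm) :
    ∃ x ∉ A, (∀ u ∈ A, L.lt i u x ↔ u ∈ Di) ∧ (∀ u ∈ A, L.lt m u x ↔ u ∈ Dm) := by
  classical
  set D : Fin n → Set M := Function.update (Function.update (fun _ => ∅) i Di) m Dm
  have hD : ∀ j, L.IsLowerIn j A (D j) := by
    intro j
    by_cases hjm : j = m
    · subst hjm; simpa [D] using hm
    by_cases hji : j = i
    · subst hji; simpa [D, hjm] using hi
    · simpa [D, hjm, hji] using L.isLowerIn_empty j A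
  obtain ⟨x, hxA, hx⟩ := hL.extension A D (fun j => (hD j).1) (fun j => (hD j).2)
  exact ⟨x, hxA, fun u hu => by simpa [D, him] using hx i u hu,
    fun u hu => by simpa [D] using hx m u hu⟩

theorem exists_separating (hL : IsUniversalNLinear n M L) (him : i ≠ m) {A : Finset M}
    {Dm : Set M} (hm : L.IsLowerIn m A Dm) {p q : M} (hp : p ∈ A) (hq : q ∈ A) (hpq : p ≠ q) :
    ∃ x ∉ A, (∀ u ∈ A, L.lt m u x ↔ u ∈ Dm) ∧ ¬ (L.lt i p x ↔ L.lt i q x) := by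
  wlog h : L.lt i p q generalizing p q
  · obtain ⟨x, hxA, hxm, hx⟩ := this hq hp hpq.symm (L.lt_of_not_lt_of_ne h hpq)
    exact ⟨x, hxA, hxm, fun hiff => hx hiff.symm⟩
  obtain ⟨x, hxA, hxi, hxm⟩ := hL.exists_two_cuts him (L.isLowerIn_not_lt i A p) hm
  refine ⟨x, hxA, hxm, fun hiff => ?_⟩
  have hpx : L.lt i p x := (hxi p hp).2 ⟨hp, L.irrefl i p⟩
  exact ((hxi q hq).1 (hiff.1 hpx)).2 h

theorem exists_gt_separating (hL : IsUniversalNLinear n M L) (him : i ≠ m) (a : M) {p q : M}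
    (hpq : p ≠ q) :
    ∃ x, L.lt m a x ∧ ¬ (L.lt i p x ↔ L.lt i q x) := by
  classical
  obtain ⟨x, -, hxm, hx⟩ := hL.exists_separating him (L.isLowerIn_not_lt m {a, p, q} a)
    (by simp) (by simp) hpq
  exact ⟨x, (hxm a (by simp)).2 ⟨by simp, L.irrefl m a⟩, hx⟩

theorem exists_lt_separating (hL : IsUniversalNLinear n M L) (him : i ≠ m) (a : M) {p q : M}
    (hpq : p ≠ q) :
    ∃ x, L.lt m x a ∧ ¬ (L.lt i p x ↔ L.lt i q x) := by
  classical
  obtain ⟨x, hxA, hxm, hx⟩ := hL.exists_separating him (L.isLowerIn_lt m {a, p, q} a)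
    (by simp) (by simp) hpq
  have hax : ¬ L.lt m a x := fun h => L.irrefl m a ((hxm a (by simp)).1 h).2
  exact ⟨x, L.lt_of_not_lt_of_ne hax (by rintro rfl; simp at hxA), hx⟩

end IsUniversalNLinear

/-- For `n ≥ 2`, every nontrivial automorphism of a universal
`n`-linear order is unbounded with respect to `<_m`: it is neither right-bounded nor
left-bounded with respect to `<_m`. -/
theorem stmt13 {n : ℕ} (hn : 2 ≤ n) {M : Type*} (L : NLinear n M)
    (hL : IsUniversalNLinear n M L) (m : Fin n) (g : L.aut) (hg : g ≠ 1) :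
    (¬ ∃ a : M, ∀ b : M, L.lt m a b → (g : Equiv.Perm M) b = b) ∧
    (¬ ∃ a : M, ∀ b : M, L.lt m b a → (g : Equiv.Perm M) b = b) := by
  obtain ⟨c, hc⟩ : ∃ c, (g : Equiv.Perm M) c ≠ c := by
    by_contra! h
    exact hg (Subtype.ext (Equiv.ext h))
  have : Nontrivial (Fin n) := Fin.nontrivial_iff_two_le.mpr hn
  obtain ⟨i, him⟩ := exists_ne m
  constructor
  · rintro ⟨a, ha⟩
    obtain ⟨x, hax, hx⟩ := hL.exists_gt_separating him a hc.symm
    exact hx (L.lt_iff_lt_of_apply_eq g.2 (ha x hax) i c)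
  · rintro ⟨a, ha⟩
    obtain ⟨x, hxa, hx⟩ := hL.exists_lt_separating him a hc.symm
    exact hx (L.lt_iff_lt_of_apply_eq g.2 (ha x hxa) i c)
end
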